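/- arXiv:math/0606165 — 7 statements merged into one kernel-verified Lean document; each statement's English description precedes it below -/
import Mathlib

section
/- Let Φ : (0,∞) → (0,∞) be continuous, integrable on (0,1), and let h : [0,∞) → [0,∞) be the inverse of Ψ(t) = ∫₀ᵗ (2∫₀ˢ Φ(τ)dτ)^(-1/2) ds. Then h ∈ C²(0,∞) ∩ C¹[0,∞), h(0) = h'(0) = 0, h > 0 on (0,∞), h'(t) = √(2∫₀^{h(t)} Φ(s) ds), and h''(t) = Φ(h(t)) for all t > 0. -/
open MeasureTheory Set Filter Topology

theorem inverse_of_psi_properties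
    (Φ : ℝ → ℝ) (hc : ContinuousOn Φ (Ioi 0))
    (hpos : ∀ s ∈ Ioi (0:ℝ), 0 < Φ s)
    (hint : IntervalIntegrable Φ volume 0 1)
    (Ψ : ℝ → ℝ)
    (hΨ : ∀ t, Ψ t = ∫ s in (0:ℝ)..t, (2 * ∫ τ in (0:ℝ)..s, Φ τ) ^ (-(1:ℝ)/2))
    (hbij : Set.BijOn Ψ (Ici 0) (Ici 0))
    (h : ℝ → ℝ)
    (hmaps : Set.MapsTo h (Ici 0) (Ici 0))
    (hleft : ∀ t ∈ Ici (0:ℝ), h (Ψ t) = t)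
    (hright : ∀ t ∈ Ici (0:ℝ), Ψ (h t) = t) :
    ContDiffOn ℝ 2 h (Ioi 0) ∧
    ContinuousOn h (Ici 0) ∧
    h 0 = 0 ∧
    HasDerivWithinAt h 0 (Ici 0) 0 ∧
    (∀ t ∈ Ioi (0:ℝ), 0 < h t) ∧
    (∀ t ∈ Ioi (0:ℝ),
      HasDerivAt h (Real.sqrt (2 * ∫ s in (0:ℝ)..h t, Φ s)) t) ∧
    (∀ t ∈ Ioi (0:ℝ), HasDerivAt (deriv h) (Φ (h t)) t) := by
  set F : ℝ → ℝ := fun t => ∫ τ in (0:ℝ)..t, Φ τ with hFdef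
  set g : ℝ → ℝ := fun s => (2 * F s) ^ (-(1:ℝ)/2) with hgdef
  -- Φ is interval integrable on [0, t] for every t ≥ 0
  have hΦint : ∀ t : ℝ, 0 ≤ t → IntervalIntegrable Φ volume 0 t := by
    intro t ht
    rcases le_total t 1 with h1 | h1
    · exact hint.mono_set (by
        rw [uIcc_of_le ht, uIcc_of_le zero_le_one]
        exact Icc_subset_Icc le_rfl h1)
    · refine hint.trans ?_
      refine (hc.mono ?_).intervalIntegrable
      rw [uIcc_of_le h1]
      exact fun x hx => lt_of_lt_of_le one_pos hx.1
  have hFpos : ∀ t : ℝ, 0 < t → 0 < F t := fun t ht =>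
    intervalIntegral.intervalIntegral_pos_of_pos_on (hΦint t ht.le)
      (fun x hx => hpos x hx.1) ht
  have hF0 : F 0 = 0 := intervalIntegral.integral_same
  -- F has derivative Φ s at every s > 0
  have hFderiv : ∀ s : ℝ, 0 < s → HasDerivAt F (Φ s) s := by
    intro s hs
    exact intervalIntegral.integral_hasDerivAt_right (hΦint s hs.le)
      (hc.stronglyMeasurableAtFilter isOpen_Ioi s hs)
      (hc.continuousAt (isOpen_Ioi.mem_nhds hs))
  -- F is continuous on [0, ∞)
  have hFcont : ContinuousOn F (Ici 0) := by
    intro x hx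
    have hcc : ContinuousOn F (uIcc 0 (x + 1)) :=
      intervalIntegral.continuousOn_primitive_interval'
        (hΦint (x + 1) (by linarith [hx.out])) left_mem_uIcc
    have hx0 : (0:ℝ) ≤ x := hx.out
    have hmem : uIcc 0 (x + 1) ∈ 𝓝[Ici 0] x := by
      rw [uIcc_of_le (by linarith)]
      exact mem_nhdsWithin.mpr ⟨Iio (x + 1), isOpen_Iio, by simp, fun y hy => ⟨hy.2, hy.1.le⟩⟩
    have hxmem : x ∈ uIcc 0 (x + 1) := by
      rw [uIcc_of_le (by linarith)]
      exact ⟨hx0, by linarith⟩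
    exact (hcc.continuousWithinAt hxmem).mono_of_mem_nhdsWithin hmem
  have hFcont' : ContinuousOn F (Ioi 0) := fun x hx =>
    ((hFderiv x hx).continuousAt).continuousWithinAt
  have hgpos : ∀ s : ℝ, 0 < s → 0 < g s := fun s hs =>
    Real.rpow_pos_of_pos (by linarith [hFpos s hs]) _
  have hgcont : ContinuousOn g (Ioi 0) :=
    (continuousOn_const.mul hFcont').rpow_const
      (fun x hx => Or.inl (mul_ne_zero two_ne_zero (hFpos x hx).ne'))
  have hΨ0 : Ψ 0 = 0 := by rw [hΨ]; exact intervalIntegral.integral_same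
  -- g is interval integrable on [0, t] for every t ≥ 0 (else Ψ would not be injective)
  have hgint : ∀ t : ℝ, 0 ≤ t → IntervalIntegrable g volume 0 t := by
    intro t ht
    rcases eq_or_lt_of_le ht with rfl | ht'
    · exact IntervalIntegrable.refl
    · by_contra hni
      have hΨt : Ψ t = 0 := by rw [hΨ]; exact intervalIntegral.integral_undef hni
      have : t = 0 := hbij.injOn (le_of_lt ht' : (0:ℝ) ≤ t) self_mem_Ici
        (by rw [hΨt, hΨ0])
      exact absurd this (ne_of_gt ht')
  -- Ψ is strictly monotone on [0, ∞)
  have hΨmono : StrictMonoOn Ψ (Ici 0) := by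
    intro a ha b hb hab
    have hab' : IntervalIntegrable g volume a b :=
      (hgint b hb).mono_set (by
        rw [uIcc_of_le hab.le, uIcc_of_le hb]
        exact Icc_subset_Icc ha le_rfl)
    have hsub : Ψ b - Ψ a = ∫ s in a..b, g s := by
      rw [hΨ, hΨ]
      exact intervalIntegral.integral_interval_sub_left (hgint b hb) (hgint a ha)
    have hposint : 0 < ∫ s in a..b, g s :=
      intervalIntegral.intervalIntegral_pos_of_pos_on hab'
        (fun x hx => hgpos x (lt_of_le_of_lt ha.out hx.1)) hab
    linarith
  -- h is strictly monotone on [0, ∞)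
  have hmono : StrictMonoOn h (Ici 0) := by
    intro a ha b hb hab
    rw [← hΨmono.lt_iff_lt (hmaps ha) (hmaps hb), hright a ha, hright b hb]
    exact hab
  have h0 : h 0 = 0 := by
    have := hleft 0 self_mem_Ici
    rwa [hΨ0] at this
  have hhpos : ∀ t ∈ Ioi (0:ℝ), 0 < h t := by
    intro t ht
    have := hmono self_mem_Ici (mem_Ici.mpr (le_of_lt ht)) ht
    rwa [h0] at this
  have hinv : Set.InvOn Ψ h (Ici 0) (Ici 0) := ⟨hright, hleft⟩
  have hbij' : Set.BijOn h (Ici 0) (Ici 0) := hinv.bijOn hmaps hbij.mapsTo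
  have himg : h '' (Ici 0) = Ici 0 := hbij'.image_eq
  -- h is continuous on [0, ∞)
  have hcon : ContinuousOn h (Ici 0) := by
    intro x hx
    rcases eq_or_lt_of_le hx.out with hx0 | hx'
    · subst hx0
      refine continuousWithinAt_right_of_monotoneOn_of_image_mem_nhdsWithin
        hmono.monotoneOn self_mem_nhdsWithin ?_
      rw [himg, h0]
      exact self_mem_nhdsWithin
    · exact (continuousAt_of_monotoneOn_of_image_mem_nhds hmono.monotoneOn
        (Ici_mem_nhds hx') (by rw [himg]; exact Ici_mem_nhds (hhpos x hx'))).continuousWithinAt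
  -- Ψ has derivative g s at every s > 0
  have hΨderiv : ∀ s : ℝ, 0 < s → HasDerivAt Ψ (g s) s := by
    intro s hs
    have key : HasDerivAt (fun u => ∫ τ in (0:ℝ)..u, g τ) (g s) s :=
      intervalIntegral.integral_hasDerivAt_right (hgint s hs.le)
        (hgcont.stronglyMeasurableAtFilter isOpen_Ioi s hs)
        (hgcont.continuousAt (isOpen_Ioi.mem_nhds hs))
    have : Ψ = fun u => ∫ τ in (0:ℝ)..u, g τ := funext fun u => hΨ u
    rw [this]
    exact key
  -- derivative of h on (0, ∞)
  have hderiv : ∀ t ∈ Ioi (0:ℝ), HasDerivAt h (Real.sqrt (2 * F (h t))) t := by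
    intro t ht
    have hht := hhpos t ht
    have h2F : 0 < 2 * F (h t) := by linarith [hFpos _ hht]
    have hca : ContinuousAt h t :=
      (hcon t (mem_Ici.mpr (le_of_lt ht))).continuousAt (Ici_mem_nhds ht)
    have hev : ∀ᶠ x in 𝓝 t, Ψ (h x) = x := by
      filter_upwards [Ioi_mem_nhds ht] with x hx using hright x (mem_Ici.mpr (le_of_lt hx))
    have key := (hΨderiv (h t) hht).of_local_left_inverse hca (ne_of_gt (hgpos _ hht)) hev
    have heq : (g (h t))⁻¹ = Real.sqrt (2 * F (h t)) := by
      rw [hgdef]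
      simp only
      rw [show (-(1:ℝ)/2) = -(1/2) by norm_num, Real.rpow_neg h2F.le, inv_inv,
        ← Real.sqrt_eq_rpow]
    rwa [heq] at key
  have hderiv_eq : ∀ t ∈ Ioi (0:ℝ), deriv h t = Real.sqrt (2 * F (h t)) :=
    fun t ht => (hderiv t ht).deriv
  -- second derivative
  have hderiv2 : ∀ t ∈ Ioi (0:ℝ), HasDerivAt (deriv h) (Φ (h t)) t := by
    intro t ht
    have hht := hhpos t ht
    have h2F : 0 < 2 * F (h t) := by linarith [hFpos _ hht]
    have hsqrt_pos : 0 < Real.sqrt (2 * F (h t)) := Real.sqrt_pos.mpr h2F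
    have hcomp : HasDerivAt (fun x => 2 * F (h x))
        (2 * (Φ (h t) * Real.sqrt (2 * F (h t)))) t :=
      (((hFderiv (h t) hht).comp t (hderiv t ht))).const_mul 2
    have hsq : HasDerivAt Real.sqrt (1 / (2 * Real.sqrt (2 * F (h t)))) (2 * F (h t)) :=
      Real.hasDerivAt_sqrt (ne_of_gt h2F)
    have key : HasDerivAt (fun x => Real.sqrt (2 * F (h x))) (Φ (h t)) t := by
      have := hsq.comp t hcomp
      refine this.congr_deriv ?_
      have hS := hsqrt_pos.ne'
      generalize Real.sqrt (2 * F (h t)) = S at hS ⊢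
      rw [div_mul_eq_mul_div, one_mul, div_eq_iff (mul_ne_zero two_ne_zero hS)]
      ring
    refine key.congr_of_eventuallyEq ?_
    filter_upwards [Ioi_mem_nhds ht] with x hx using hderiv_eq x hx
  -- limit of the derivative at 0 from the right
  have hderiv_lim : Tendsto (deriv h) (𝓝[>] (0:ℝ)) (𝓝 0) := by
    have hh : Tendsto h (𝓝[>] (0:ℝ)) (𝓝[Ici 0] 0) := by
      refine tendsto_nhdsWithin_of_tendsto_nhds_of_eventually_within _ ?_ ?_
      · have := (hcon 0 self_mem_Ici).tendsto
        rw [h0] at this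
        exact this.mono_left (nhdsWithin_mono _ Ioi_subset_Ici_self)
      · filter_upwards [self_mem_nhdsWithin] with x hx using hmaps (mem_Ici.mpr (le_of_lt hx))
    have hFh : Tendsto (fun x => F (h x)) (𝓝[>] (0:ℝ)) (𝓝 0) := by
      have := (hFcont 0 self_mem_Ici).tendsto.comp hh
      rwa [hF0] at this
    have hmain : Tendsto (fun x => Real.sqrt (2 * F (h x))) (𝓝[>] (0:ℝ)) (𝓝 0) := by
      have h2 : Tendsto (fun x => 2 * F (h x)) (𝓝[>] (0:ℝ)) (𝓝 0) := by
        have := hFh.const_mul 2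
        simpa using this
      have := (Real.continuous_sqrt.tendsto 0).comp h2
      rwa [Real.sqrt_zero] at this
    refine hmain.congr' ?_
    filter_upwards [self_mem_nhdsWithin] with x hx using (hderiv_eq x hx).symm
  have hat0 : HasDerivWithinAt h 0 (Ici 0) 0 := by
    refine hasDerivWithinAt_Ici_of_tendsto_deriv
      (fun t ht => ((hderiv t ht).differentiableAt).differentiableWithinAt)
      ((hcon 0 self_mem_Ici).mono Ioi_subset_Ici_self) self_mem_nhdsWithin hderiv_lim
  -- C² regularity
  have hC2 : ContDiffOn ℝ 2 h (Ioi 0) := by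
    rw [show ((2:WithTop ℕ∞)) = 1 + 1 from rfl,
      contDiffOn_succ_iff_deriv_of_isOpen isOpen_Ioi]
    refine ⟨fun t ht => ((hderiv t ht).differentiableAt).differentiableWithinAt,
      by simp, ?_⟩
    rw [show ((1:WithTop ℕ∞)) = 0 + 1 from rfl,
      contDiffOn_succ_iff_deriv_of_isOpen isOpen_Ioi]
    refine ⟨fun t ht => ((hderiv2 t ht).differentiableAt).differentiableWithinAt,
      by simp, ?_⟩
    rw [contDiffOn_zero]
    have : ContinuousOn (fun t => Φ (h t)) (Ioi 0) :=
      hc.comp (hcon.mono Ioi_subset_Ici_self) (fun x hx => hhpos x hx)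
    exact this.congr (fun t ht => (hderiv2 t ht).deriv)
  exact ⟨hC2, hcon, h0, hat0, hhpos, hderiv, hderiv2⟩
end

section
/- Let H ∈ C²(0,b] ∩ C[0,b] satisfy H'' (t) = −p(t) g(H(t)) on (0,b], H(0) = 0, H, H' > 0 on (0,b], where p is positive and continuous on (0,b] and g is positive and decreasing on (0,∞). Then for all 0 < t ≤ b: (H')²(t) ≤ 2 H(b) p(t) g(H(t)) + (H')²(b) whenever p is nonincreasing. -/
open Set

theorem H_gradient_estimate
    (b : ℝ) (hb : 0 < b) (hb1 : b ≤ 1)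
    (p g H : ℝ → ℝ)
    (hp_pos : ∀ t ∈ Ioc (0:ℝ) b, 0 < p t)
    (hp_cont : ContinuousOn p (Ioc 0 b))
    (hp_anti : AntitoneOn p (Ioc 0 b))
    (hg_pos : ∀ t ∈ Ioi (0:ℝ), 0 < g t)
    (hg_anti : StrictAntiOn g (Ioi 0))
    (hH_cont : ContinuousOn H (Icc 0 b))
    (hH0 : H 0 = 0)
    (hH_pos : ∀ t ∈ Ioc (0:ℝ) b, 0 < H t)
    (hH'_pos : ∀ t ∈ Ioc (0:ℝ) b, 0 < deriv H t)
    (hH' : ∀ t ∈ Ioc (0:ℝ) b, HasDerivAt H (deriv H t) t)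
    (hH'' : ∀ t ∈ Ioc (0:ℝ) b, HasDerivAt (deriv H) (-(p t * g (H t))) t) :
    ∀ t ∈ Ioc (0:ℝ) b,
      (deriv H t) ^ 2 ≤ 2 * H b * p t * g (H t) + (deriv H b) ^ 2 := by
  intro t ht
  obtain ⟨ht0, htb⟩ := ht
  have htmem : t ∈ Ioc (0:ℝ) b := ⟨ht0, htb⟩
  have hbmem : b ∈ Ioc (0:ℝ) b := ⟨hb, le_refl b⟩
  set c : ℝ := p t * g (H t) with hc
  have hc_pos : 0 < c :=
    mul_pos (hp_pos t htmem) (hg_pos _ (hH_pos t htmem))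
  set φ : ℝ → ℝ := fun s => (deriv H s) ^ 2 + 2 * c * H s with hφdef
  -- H is monotone on Ioc 0 b via strict mono on Icc 0 b
  have hHmono : StrictMonoOn H (Icc 0 b) := by
    apply strictMonoOn_of_deriv_pos (convex_Icc 0 b) hH_cont
    intro x hx
    rw [interior_Icc] at hx
    exact hH'_pos x ⟨hx.1, hx.2.le⟩
  -- derivative of φ on Ioc 0 b
  have hφ' : ∀ s ∈ Ioc (0:ℝ) b,
      HasDerivAt φ (2 * deriv H s * (-(p s * g (H s))) + 2 * c * deriv H s) s := by
    intro s hs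
    have h1 : HasDerivAt (fun u => (deriv H u) ^ 2)
        (2 * (deriv H s) ^ 1 * (-(p s * g (H s)))) s := (hH'' s hs).pow 2
    have h2 : HasDerivAt (fun u => 2 * c * H u) (2 * c * deriv H s) s :=
      (hH' s hs).const_mul (2 * c)
    rw [show 2 * deriv H s * (-(p s * g (H s))) + 2 * c * deriv H s
        = 2 * (deriv H s) ^ 1 * (-(p s * g (H s))) + 2 * c * deriv H s by ring]
    exact h1.add h2
  -- φ is monotone on Icc t b
  have hsub : Icc t b ⊆ Ioc (0:ℝ) b := fun x hx => ⟨lt_of_lt_of_le ht0 hx.1, hx.2⟩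
  have hderivH_cont : ContinuousOn (deriv H) (Icc t b) := fun s hs =>
    ((hH'' s (hsub hs)).continuousAt).continuousWithinAt
  have hH_cont' : ContinuousOn H (Icc t b) :=
    hH_cont.mono (fun x hx => ⟨(hsub hx).1.le, hx.2⟩)
  have hφcont : ContinuousOn φ (Icc t b) :=
    ((hderivH_cont.pow 2).add (continuousOn_const.mul hH_cont'))
  have hmono : MonotoneOn φ (Icc t b) := by
    apply monotoneOn_of_deriv_nonneg (convex_Icc t b) hφcont
    · intro x hx
      rw [interior_Icc] at hx
      exact ((hφ' x (hsub ⟨hx.1.le, hx.2.le⟩)).differentiableAt).differentiableWithinAt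
    · intro x hx
      rw [interior_Icc] at hx
      have hxm : x ∈ Ioc (0:ℝ) b := hsub ⟨hx.1.le, hx.2.le⟩
      rw [(hφ' x hxm).deriv]
      -- key inequality: p x * g (H x) ≤ c
      have hpx : p x ≤ p t := hp_anti htmem hxm hx.1.le
      have hHtx : H t ≤ H x :=
        (hHmono.monotoneOn ⟨ht0.le, htb⟩ ⟨hxm.1.le, hxm.2⟩ hx.1.le)
      have hgx : g (H x) ≤ g (H t) :=
        hg_anti.antitoneOn (hH_pos t htmem) (hH_pos x hxm) hHtx
      have hkey : p x * g (H x) ≤ c :=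
        mul_le_mul hpx hgx (hg_pos _ (hH_pos x hxm)).le (hp_pos t htmem).le
      have hD : 0 < deriv H x := hH'_pos x hxm
      nlinarith
  have hφtb : φ t ≤ φ b := hmono ⟨le_refl t, htb⟩ ⟨htb, le_refl b⟩ htb
  have hHt : 0 < H t := hH_pos t htmem
  simp only [hφdef, hc] at hφtb
  have hcHt : 0 < p t * g (H t) * H t := mul_pos (by rw [← hc]; exact hc_pos) hHt
  nlinarith [hφtb, hcHt]
end

section
/- Let Ω ⊂ ℝᴺ be a bounded domain, and Ψ : Ω̄ × (0,∞) → ℝ continuous such that s ↦ Ψ(x,s)/s is strictly decreasing for each x ∈ Ω. Let 0 < a < 1 and v, w ∈ C²(Ω) ∩ C(Ω̄) with v, w > 0 in Ω, v < w on ∂Ω, and Δw + Ψ(x,w) + |∇w|^a ≤ 0 ≤ Δv + Ψ(x,v) + |∇v|^a in Ω. Then v ≤ w in Ω. -/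
open Set Filter Topology

/-- 1D second derivative test at a local max. -/
lemma second_deriv_nonpos_of_isLocalMax {g : ℝ → ℝ} (hg : ContDiffAt ℝ 2 g 0)
    (hmax : IsLocalMax g 0) : deriv (deriv g) 0 ≤ 0 := by
  by_contra hc
  push_neg at hc
  -- deriv g is C¹ at 0, hence differentiable at 0
  have hfd : ContDiffAt ℝ 1 (fderiv ℝ g) 0 := hg.fderiv_right (by norm_num)
  have hdg : ContDiffAt ℝ 1 (deriv g) 0 := by
    have : (deriv g) = fun y => fderiv ℝ g y 1 := by
      funext y; rfl
    rw [this]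
    exact (ContinuousLinearMap.apply ℝ ℝ (1:ℝ)).contDiff.contDiffAt.comp 0 hfd
  have hD : HasDerivAt (deriv g) (deriv (deriv g) 0) 0 :=
    (hdg.differentiableAt (by norm_num)).hasDerivAt
  have hd0 : deriv g 0 = 0 := hmax.deriv_eq_zero
  -- slope of deriv g tends to the (positive) second derivative
  have hslope : Tendsto (slope (deriv g) 0) (𝓝[≠] (0:ℝ)) (𝓝 (deriv (deriv g) 0)) :=
    hasDerivAt_iff_tendsto_slope.mp hD
  have hpos : ∀ᶠ t in 𝓝[>] (0:ℝ), 0 < deriv g t := by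
    have h1 : ∀ᶠ t in 𝓝[≠] (0:ℝ), 0 < slope (deriv g) 0 t :=
      hslope.eventually (eventually_gt_nhds hc)
    have h2 : ∀ᶠ t in 𝓝[>] (0:ℝ), 0 < slope (deriv g) 0 t :=
      h1.filter_mono (nhdsWithin_mono _ (fun t ht => ne_of_gt ht))
    filter_upwards [h2, self_mem_nhdsWithin] with t ht ht'
    have : slope (deriv g) 0 t = deriv g t / t := by
      simp [slope_def_field, hd0]
    rw [this] at ht
    have : 0 < t := ht'
    by_contra hneg
    push_neg at hneg
    have : deriv g t / t ≤ 0 := div_nonpos_of_nonpos_of_nonneg hneg this.le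
    linarith
  -- get an interval where deriv g > 0
  rw [eventually_nhdsWithin_iff] at hpos
  obtain ⟨ε1, hε1, hball1⟩ := Metric.eventually_nhds_iff.mp hpos
  obtain ⟨u, hu, hgu⟩ := hg.contDiffOn le_rfl (by simp)
  obtain ⟨ε2, hε2, hball2⟩ := Metric.mem_nhds_iff.mp hu
  obtain ⟨ε3, hε3, hball3⟩ := Metric.eventually_nhds_iff.mp hmax
  set δ : ℝ := min ε1 (min ε2 ε3) / 2 with hδdef
  have hδ : 0 < δ := by positivity
  have hδ1 : δ < ε1 := by
    have : δ ≤ ε1 / 2 := by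
      apply div_le_div_of_nonneg_right _ (by norm_num)
      exact min_le_left _ _
    linarith
  have hδ2 : δ < ε2 := by
    have : δ ≤ ε2 / 2 := by
      apply div_le_div_of_nonneg_right _ (by norm_num)
      exact le_trans (min_le_right _ _) (min_le_left _ _)
    linarith
  have hδ3 : δ < ε3 := by
    have : δ ≤ ε3 / 2 := by
      apply div_le_div_of_nonneg_right _ (by norm_num)
      exact le_trans (min_le_right _ _) (min_le_right _ _)
    linarith
  have hIcc : Icc (0:ℝ) δ ⊆ u := by
    intro t ht
    apply hball2
    rw [Metric.mem_ball, Real.dist_eq, sub_zero, abs_of_nonneg ht.1]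
    exact lt_of_le_of_lt ht.2 hδ2
  have hmono : StrictMonoOn g (Icc (0:ℝ) δ) := by
    apply strictMonoOn_of_deriv_pos (convex_Icc _ _)
    · exact (hgu.continuousOn.mono hIcc)
    · intro t ht
      rw [interior_Icc] at ht
      apply hball1
      · rw [Real.dist_eq, sub_zero, abs_of_pos ht.1]
        exact lt_trans ht.2 hδ1
      · exact ht.1
  have h1 : g 0 < g δ := hmono (left_mem_Icc.mpr hδ.le) (right_mem_Icc.mpr hδ.le) hδ
  have h2 : g δ ≤ g 0 := by
    apply hball3
    rw [Real.dist_eq, sub_zero, abs_of_pos hδ]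
    exact hδ3
  linarith

/-- Second directional derivative at an interior local max is nonpositive. -/
lemma fderiv_fderiv_nonpos_of_isLocalMax
    {E : Type*} [NormedAddCommGroup E] [NormedSpace ℝ E]
    {f : E → ℝ} {x : E} (hf : ContDiffAt ℝ 2 f x) (hmax : IsLocalMax f x) (e : E) :
    fderiv ℝ (fderiv ℝ f) x e e ≤ 0 := by
  set L : ℝ → E := fun t => x + t • e with hL
  have hLc : Continuous L := by continuity
  have hL0 : L 0 = x := by simp [hL]
  have hLd : ∀ t : ℝ, HasDerivAt L e t := by
    intro t
    simpa [hL] using ((hasDerivAt_id t).smul_const e).const_add x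
  set g : ℝ → ℝ := fun t => f (L t) with hg
  have hLsm : ContDiff ℝ 2 L := by
    apply contDiff_const.add (contDiff_id.smul contDiff_const)
  have hgC : ContDiffAt ℝ 2 g 0 := by
    have := ContDiffAt.comp (0:ℝ) (hL0 ▸ hf) hLsm.contDiffAt
    exact this
  have hgmax : IsLocalMax g 0 := by
    have : Filter.Tendsto L (nhds 0) (nhds x) := by
      rw [← hL0]; exact hLc.continuousAt
    have h2 := this.eventually hmax
    simpa [IsLocalMax, IsMaxFilter, hg, hL0] using h2
  -- obtain local derivative data
  obtain ⟨f', ⟨u, hu, hf'⟩, hf'C⟩ := contDiffAt_succ_iff_hasFDerivAt.mp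
    (show ContDiffAt ℝ (1+1 : ℕ) f x from hf)
  have hfe : ∀ᶠ y in nhds x, fderiv ℝ f y = f' y := by
    filter_upwards [hu] with y hy
    exact (hf' y hy).fderiv
  -- deriv g t = f' (L t) e near 0
  have hderiv : ∀ᶠ t in nhds (0:ℝ), deriv g t = f' (L t) e := by
    have hLt : Filter.Tendsto L (nhds 0) (nhds x) := by
      rw [← hL0]; exact hLc.continuousAt
    filter_upwards [hLt.eventually hu] with t ht
    exact ((hf' (L t) ht).comp_hasDerivAt t (hLd t)).deriv
  -- second derivative of g
  have hf'd : DifferentiableAt ℝ f' x := hf'C.differentiableAt (by norm_num)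
  have hD2 : HasDerivAt (fun t => f' (L t) e) (fderiv ℝ f' x e e) 0 := by
    have h1 : HasDerivAt (fun t => f' (L t)) (fderiv ℝ f' x e) 0 := by
      have h3 := HasFDerivAt.comp_hasDerivAt (0:ℝ) (hL0 ▸ hf'd.hasFDerivAt) (hLd 0)
      rw [hL0] at h3; exact h3
    exact (ContinuousLinearMap.apply ℝ ℝ e).hasFDerivAt.comp_hasDerivAt 0 h1
  have key : deriv (deriv g) 0 = fderiv ℝ f' x e e := by
    rw [Filter.EventuallyEq.deriv_eq hderiv]
    exact hD2.deriv
  have hfix : fderiv ℝ (fderiv ℝ f) x = fderiv ℝ f' x :=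
    Filter.EventuallyEq.fderiv_eq hfe
  have := second_deriv_nonpos_of_isLocalMax hgC hgmax
  rw [key] at this
  rw [hfix]
  exact this

noncomputable def lap {N : ℕ} (u : EuclideanSpace ℝ (Fin N) → ℝ)
    (x : EuclideanSpace ℝ (Fin N)) : ℝ :=
  ∑ i : Fin N, iteratedFDeriv ℝ 2 u x
    ![EuclideanSpace.single i (1:ℝ), EuclideanSpace.single i (1:ℝ)]

set_option maxHeartbeats 1000000 in
theorem comparison_principle_sublinear_gradient
    {N : ℕ} (Ω : Set (EuclideanSpace ℝ (Fin N)))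
    (hΩo : IsOpen Ω) (hΩb : Bornology.IsBounded Ω)
    (Ψ : EuclideanSpace ℝ (Fin N) → ℝ → ℝ)
    (hΨc : ContinuousOn (fun q : EuclideanSpace ℝ (Fin N) × ℝ => Ψ q.1 q.2)
      ((closure Ω) ×ˢ Ioi 0))
    (hΨdec : ∀ x ∈ Ω, StrictAntiOn (fun s => Ψ x s / s) (Ioi 0))
    (a : ℝ) (ha : a ∈ Ioo (0:ℝ) 1)
    (v w : EuclideanSpace ℝ (Fin N) → ℝ)
    (hv : ContDiffOn ℝ 2 v Ω) (hvc : ContinuousOn v (closure Ω))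
    (hw : ContDiffOn ℝ 2 w Ω) (hwc : ContinuousOn w (closure Ω))
    (hvpos : ∀ x ∈ Ω, 0 < v x) (hwpos : ∀ x ∈ Ω, 0 < w x)
    (hbd : ∀ x ∈ frontier Ω, v x < w x)
    (hsub : ∀ x ∈ Ω, 0 ≤ lap v x + Ψ x (v x) + ‖gradient v x‖ ^ a)
    (hsup : ∀ x ∈ Ω, lap w x + Ψ x (w x) + ‖gradient w x‖ ^ a ≤ 0) :
    ∀ x ∈ Ω, v x ≤ w x := by
  by_contra hcon
  push_neg at hcon
  obtain ⟨x₁, hx₁Ω, hx₁⟩ := hcon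
  -- the compact set where w ≤ v
  set K : Set (EuclideanSpace ℝ (Fin N)) :=
    closure Ω ∩ (fun x => v x - w x) ⁻¹' Ici 0 with hKdef
  have hKsub : K ⊆ Ω := by
    rintro x ⟨hx1, hx2⟩
    by_contra hxΩ
    have hxf : x ∈ frontier Ω := by
      rw [frontier, hΩo.interior_eq]
      exact ⟨hx1, hxΩ⟩
    have := hbd x hxf
    simp only [mem_preimage, mem_Ici, sub_nonneg] at hx2
    linarith
  have hKclosed : IsClosed K :=
    (hvc.sub hwc).preimage_isClosed_of_isClosed isClosed_closure isClosed_Ici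
  have hKcomp : IsCompact K :=
    (hΩb.isCompact_closure).of_isClosed_subset hKclosed inter_subset_left
  have hKne : K.Nonempty :=
    ⟨x₁, subset_closure hx₁Ω, by simp [mem_preimage, sub_nonneg, hx₁.le]⟩
  have hratio : ContinuousOn (fun x => v x / w x) K := by
    apply ContinuousOn.div
    · exact hvc.mono (inter_subset_left.trans (subset_refl _))
    · exact hwc.mono inter_subset_left
    · exact fun x hx => ne_of_gt (hwpos x (hKsub hx))
  obtain ⟨x0, hx0K, hx0max⟩ := hKcomp.exists_isMaxOn hKne hratio
  have hx0Ω : x0 ∈ Ω := hKsub hx0K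
  set σ : ℝ := v x0 / w x0 with hσdef
  have hwx0 : 0 < w x0 := hwpos _ hx0Ω
  have hσ1 : 1 < σ := by
    have h1 : 1 < v x₁ / w x₁ := (one_lt_div (hwpos _ hx₁Ω)).mpr hx₁
    have h2 : v x₁ / w x₁ ≤ σ :=
      hx0max ⟨subset_closure hx₁Ω, by simp [mem_preimage, sub_nonneg, hx₁.le]⟩
    linarith
  have hσ0 : 0 < σ := by linarith
  have hvx0 : v x0 = σ * w x0 := by
    rw [hσdef, div_mul_cancel₀]
    exact ne_of_gt hwx0
  set φ : EuclideanSpace ℝ (Fin N) → ℝ := fun x => v x - σ * w x with hφdef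
  have hφ0 : φ x0 = 0 := by simp [hφdef, hvx0]
  have hφle : ∀ x ∈ Ω, φ x ≤ 0 := by
    intro x hxΩ
    by_cases h : w x ≤ v x
    · have hxK : x ∈ K := ⟨subset_closure hxΩ, by simp [mem_preimage, sub_nonneg, h]⟩
      have := hx0max hxK
      have hwx : 0 < w x := hwpos x hxΩ
      simp only [hφdef, sub_nonpos]
      calc v x = (v x / w x) * w x := by field_simp
        _ ≤ σ * w x := by
            apply mul_le_mul_of_nonneg_right this hwx.le
    · push_neg at h
      have hwx : 0 < w x := hwpos x hxΩ
      simp only [hφdef, sub_nonpos]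
      nlinarith
  have hmax : IsLocalMax φ x0 := by
    filter_upwards [hΩo.mem_nhds hx0Ω] with y hy
    rw [hφ0]
    exact hφle y hy
  -- smoothness
  have hvA : ContDiffAt ℝ 2 v x0 := hv.contDiffAt (hΩo.mem_nhds hx0Ω)
  have hwA : ContDiffAt ℝ 2 w x0 := hw.contDiffAt (hΩo.mem_nhds hx0Ω)
  have hφA : ContDiffAt ℝ 2 φ x0 := hvA.sub (contDiffAt_const.mul hwA)
  -- first derivatives
  have hdv : DifferentiableAt ℝ v x0 := hvA.differentiableAt (by norm_num)
  have hdw : DifferentiableAt ℝ w x0 := hwA.differentiableAt (by norm_num)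
  have hfφ : fderiv ℝ φ x0 = fderiv ℝ v x0 - σ • fderiv ℝ w x0 := by
    rw [hφdef, fderiv_fun_sub hdv (hdw.const_mul σ), fderiv_const_mul hdw σ]
  have h0 : fderiv ℝ φ x0 = 0 := hmax.fderiv_eq_zero
  have hfv : fderiv ℝ v x0 = σ • fderiv ℝ w x0 := by
    rw [← sub_eq_zero, ← hfφ, h0]
  -- gradient norms
  have hgrad : ‖gradient v x0‖ = σ * ‖gradient w x0‖ := by
    rw [gradient, gradient, hfv]
    rw [LinearIsometryEquiv.norm_map, LinearIsometryEquiv.norm_map,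
      norm_smul, Real.norm_eq_abs, abs_of_pos hσ0]
  -- second derivatives
  have hEq : (fun x => fderiv ℝ φ x)
      =ᶠ[nhds x0] fun x => fderiv ℝ v x - σ • fderiv ℝ w x := by
    filter_upwards [hΩo.mem_nhds hx0Ω] with y hy
    have hdvy : DifferentiableAt ℝ v y :=
      (hv.contDiffAt (hΩo.mem_nhds hy)).differentiableAt (by norm_num)
    have hdwy : DifferentiableAt ℝ w y :=
      (hw.contDiffAt (hΩo.mem_nhds hy)).differentiableAt (by norm_num)
    rw [hφdef, fderiv_fun_sub hdvy (hdwy.const_mul σ), fderiv_const_mul hdwy σ]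
  have hdfv : DifferentiableAt ℝ (fderiv ℝ v) x0 :=
    (hvA.fderiv_right (m := 1) (by norm_num)).differentiableAt (by norm_num)
  have hdfw : DifferentiableAt ℝ (fderiv ℝ w) x0 :=
    (hwA.fderiv_right (m := 1) (by norm_num)).differentiableAt (by norm_num)
  have hff : fderiv ℝ (fderiv ℝ φ) x0
      = fderiv ℝ (fderiv ℝ v) x0 - σ • fderiv ℝ (fderiv ℝ w) x0 := by
    rw [hEq.fderiv_eq, fderiv_fun_sub (g := fun y => σ • fderiv ℝ w y) hdfv (hdfw.const_smul σ), fderiv_fun_const_smul hdfw σ]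
  -- laplacian comparison
  have hlap : lap v x0 ≤ σ * lap w x0 := by
    have key : ∀ i : Fin N,
        fderiv ℝ (fderiv ℝ v) x0 (EuclideanSpace.single i (1:ℝ)) (EuclideanSpace.single i (1:ℝ))
        ≤ σ * fderiv ℝ (fderiv ℝ w) x0 (EuclideanSpace.single i (1:ℝ))
          (EuclideanSpace.single i (1:ℝ)) := by
      intro i
      have h1 := fderiv_fderiv_nonpos_of_isLocalMax hφA hmax (EuclideanSpace.single i (1:ℝ))
      rw [hff] at h1
      simp only [ContinuousLinearMap.sub_apply, ContinuousLinearMap.smul_apply,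
        ContinuousLinearMap.coe_sub', Pi.sub_apply, ContinuousLinearMap.coe_smul',
        Pi.smul_apply, smul_eq_mul] at h1
      linarith
    rw [lap, lap, Finset.mul_sum]
    apply Finset.sum_le_sum
    intro i _
    rw [iteratedFDeriv_two_apply, iteratedFDeriv_two_apply]
    simpa using key i
  -- final contradiction
  have hG : (0:ℝ) ≤ ‖gradient w x0‖ ^ a := Real.rpow_nonneg (norm_nonneg _) a
  have hgradpow : ‖gradient v x0‖ ^ a = σ ^ a * ‖gradient w x0‖ ^ a := by
    rw [hgrad, Real.mul_rpow hσ0.le (norm_nonneg _)]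
  have hσa : σ ^ a ≤ σ := by
    have := Real.rpow_le_rpow_of_exponent_le hσ1.le ha.2.le
    rwa [Real.rpow_one] at this
  have h1 := hsub x0 hx0Ω
  have h2 := hsup x0 hx0Ω
  -- derive σ * Ψ x0 (w x0) ≤ Ψ x0 (σ * w x0)
  have hkey : σ * Ψ x0 (w x0) ≤ Ψ x0 (σ * w x0) := by
    rw [hgradpow, hvx0] at h1
    have e1 : σ ^ a * ‖gradient w x0‖ ^ a ≤ σ * ‖gradient w x0‖ ^ a :=
      mul_le_mul_of_nonneg_right hσa hG
    have e2 : σ * (lap w x0 + Ψ x0 (w x0) + ‖gradient w x0‖ ^ a) ≤ 0 :=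
      mul_nonpos_of_nonneg_of_nonpos hσ0.le h2
    have e3 : σ * lap w x0 + σ * Ψ x0 (w x0) + σ * ‖gradient w x0‖ ^ a ≤ 0 := by
      ring_nf; ring_nf at e2; linarith
    linarith
  -- strict antitonicity contradiction
  have hanti := hΨdec x0 hx0Ω (show w x0 ∈ Ioi 0 from hwx0)
    (show σ * w x0 ∈ Ioi 0 by exact mul_pos hσ0 hwx0)
    (by nlinarith : w x0 < σ * w x0)
  simp only at hanti
  rw [div_lt_div_iff₀ (mul_pos hσ0 hwx0) hwx0] at hanti
  nlinarith [mul_le_mul_of_nonneg_right hkey hwx0.le]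
end

section
/- Let α ∈ (0,2) with α + β = 1 (so β = 1 − α), and let H solve H''(t) = −t^{−α} H(t)^{α−1} on (0,b], H(0) = 0, H, H' > 0 on (0,b], H concave. Then there exist constants c₂ > 0 and δ₂ ∈ (0,b) such that H(t) ≤ c₂ t (−ln t)^{1/(2−α)} for all 0 < t ≤ δ₂. -/
open Set Filter Topology

theorem borderline_upper_bound
    (α : ℝ) (hα : α ∈ Ioo (0:ℝ) 2)
    (b : ℝ) (hb : 0 < b) (hb1 : b < 1) (H : ℝ → ℝ)
    (hH_cont : ContinuousOn H (Icc 0 b))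
    (hH0 : H 0 = 0)
    (hH_pos : ∀ t ∈ Ioc (0:ℝ) b, 0 < H t)
    (hH'_pos : ∀ t ∈ Ioc (0:ℝ) b, 0 < deriv H t)
    (hH' : ∀ t ∈ Ioc (0:ℝ) b, HasDerivAt H (deriv H t) t)
    (hH'' : ∀ t ∈ Ioc (0:ℝ) b,
      HasDerivAt (deriv H) (-(t ^ (-α) * (H t) ^ (α - 1))) t)
    (hconc : AntitoneOn (deriv H) (Ioc 0 b)) :
    ∃ c₂ > (0:ℝ), ∃ δ₂ ∈ Ioo (0:ℝ) b, ∀ t ∈ Ioc (0:ℝ) δ₂,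
      H t ≤ c₂ * t * (-Real.log t) ^ (1 / (2 - α)) := by
  obtain ⟨hα0, hα2⟩ := hα
  have h2α : (0:ℝ) < 2 - α := by linarith
  have hHc : ∀ x ∈ Ioc (0:ℝ) b, ContinuousAt H x := fun x hx => (hH' x hx).continuousAt
  have hH'c : ∀ x ∈ Ioc (0:ℝ) b, ContinuousAt (deriv H) x := fun x hx => (hH'' x hx).continuousAt
  -- H tends to 0 at 0+
  have hH0tend : Tendsto H (𝓝[>] (0:ℝ)) (𝓝 0) := by
    have h1 : Tendsto H (𝓝[Icc 0 b] (0:ℝ)) (𝓝 0) := by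
      have h := hH_cont 0 ⟨le_refl 0, hb.le⟩
      rwa [ContinuousWithinAt, hH0] at h
    refine h1.mono_left ?_
    rw [← nhdsWithin_Ioc_eq_nhdsGT hb]
    exact nhdsWithin_mono 0 Ioc_subset_Icc_self
  -- Step A : t H'(t) ≤ H(t)
  have hA : ∀ t ∈ Ioc (0:ℝ) b, t * deriv H t ≤ H t := by
    intro t ht
    have key : ∀ ε ∈ Ioo (0:ℝ) t, (t - ε) * deriv H t ≤ H t - H ε := by
      intro ε hε
      have hsub : Icc ε t ⊆ Ioc 0 b := fun x hx => ⟨lt_of_lt_of_le hε.1 hx.1, hx.2.trans ht.2⟩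
      obtain ⟨c, hc, hceq⟩ := exists_hasDerivAt_eq_slope H (deriv H) hε.2
        (fun x hx => (hHc x (hsub hx)).continuousWithinAt)
        (fun x hx => hH' x (hsub ⟨hx.1.le, hx.2.le⟩))
      have hcmem : c ∈ Ioc (0:ℝ) b := ⟨hε.1.trans hc.1, hc.2.le.trans ht.2⟩
      have hle : deriv H t ≤ deriv H c := hconc hcmem ht hc.2.le
      have hεt : (0:ℝ) < t - ε := by linarith [hε.2]
      rw [hceq] at hle
      calc (t - ε) * deriv H t ≤ (t - ε) * ((H t - H ε) / (t - ε)) := by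
            exact mul_le_mul_of_nonneg_left hle hεt.le
        _ = H t - H ε := by field_simp
    have l1 : Tendsto (fun ε => (t - ε) * deriv H t) (𝓝[>] (0:ℝ)) (𝓝 (t * deriv H t)) := by
      have : Tendsto (fun ε : ℝ => (t - ε) * deriv H t) (𝓝 0) (𝓝 ((t - 0) * deriv H t)) :=
        (tendsto_const_nhds.sub tendsto_id).mul_const _
      simpa using this.mono_left nhdsWithin_le_nhds
    have l2 : Tendsto (fun ε => H t - H ε) (𝓝[>] (0:ℝ)) (𝓝 (H t - 0)) :=
      tendsto_const_nhds.sub hH0tend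
    have hev : ∀ᶠ ε in 𝓝[>] (0:ℝ), (t - ε) * deriv H t ≤ H t - H ε := by
      filter_upwards [Ioo_mem_nhdsGT_of_mem ⟨le_refl (0:ℝ), ht.1⟩] with ε hε
      exact key ε hε
    have := le_of_tendsto_of_tendsto l1 l2 hev
    simpa using this
  -- strict monotonicity of H
  have hSM : StrictMonoOn H (Icc 0 b) := by
    apply strictMonoOn_of_deriv_pos (convex_Icc 0 b) hH_cont
    intro x hx
    rw [interior_Icc] at hx
    exact hH'_pos x ⟨hx.1, hx.2.le⟩
  -- y = H/t and its derivative
  have hyd : ∀ x ∈ Ioc (0:ℝ) b, HasDerivAt (fun s => H s / s)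
      ((deriv H x * x - H x * 1) / x ^ 2) x := by
    intro x hx
    exact (hH' x hx).div (hasDerivAt_id x) (ne_of_gt hx.1)
  have hyc : ContinuousOn (fun s => H s / s) (Ioc (0:ℝ) b) :=
    fun x hx => ((hyd x hx).continuousAt).continuousWithinAt
  have hyanti : AntitoneOn (fun s => H s / s) (Ioc (0:ℝ) b) := by
    apply antitoneOn_of_deriv_nonpos (convex_Ioc 0 b) hyc
    · intro x hx
      rw [interior_Ioc] at hx
      exact ((hyd x ⟨hx.1, hx.2.le⟩).differentiableAt).differentiableWithinAt
    · intro x hx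
      rw [interior_Ioc] at hx
      have hx' : x ∈ Ioc (0:ℝ) b := ⟨hx.1, hx.2.le⟩
      rw [(hyd x hx').deriv]
      have h1 := hA x hx'
      have hx2 : (0:ℝ) < x ^ 2 := pow_pos hx'.1 2
      apply div_nonpos_of_nonpos_of_nonneg _ hx2.le
      nlinarith
  -- limit of w at 0+
  have hwt : Tendsto (fun s => H s - s * deriv H s) (𝓝[>] (0:ℝ)) (𝓝 0) := by
    have hsq : Tendsto (fun s => s * deriv H s) (𝓝[>] (0:ℝ)) (𝓝 0) := by
      apply tendsto_of_tendsto_of_tendsto_of_le_of_le' tendsto_const_nhds hH0tend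
      · filter_upwards [Ioc_mem_nhdsGT_of_mem ⟨le_refl (0:ℝ), hb⟩] with s hs
        exact (mul_pos hs.1 (hH'_pos s hs)).le
      · filter_upwards [Ioc_mem_nhdsGT_of_mem ⟨le_refl (0:ℝ), hb⟩] with s hs
        exact hA s hs
    simpa using hH0tend.sub hsq
  -- helper limit lemma
  have hlim : ∀ (g : ℝ → ℝ) (t : ℝ), 0 < t → MonotoneOn g (Ioc 0 t) →
      Tendsto g (𝓝[>] (0:ℝ)) (𝓝 0) → 0 ≤ g t := by
    intro g t ht hm hg
    have hev : ∀ᶠ ε in 𝓝[>] (0:ℝ), g ε ≤ g t := by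
      filter_upwards [Ioc_mem_nhdsGT_of_mem ⟨le_refl (0:ℝ), ht⟩] with ε hε
      exact hm hε ⟨ht, le_refl t⟩ hε.2
    exact le_of_tendsto hg hev
  -- derivative of w
  have hwd : ∀ x ∈ Ioc (0:ℝ) b, HasDerivAt (fun s => H s - s * deriv H s)
      (x * (x ^ (-α) * H x ^ (α - 1))) x := by
    intro x hx
    have h1 := (hH' x hx).sub ((hasDerivAt_id x).mul (hH'' x hx))
    have h2 : HasDerivAt (fun s => H s - s * deriv H s)
        (deriv H x - (1 * deriv H x + id x * -(x ^ (-α) * H x ^ (α - 1)))) x := h1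
    convert h2 using 1
    simp only [id_eq, one_mul]
    ring
  set C₀ : ℝ := 1 / (2 - α) + 1 with hC₀def
  have hC₀ : 0 < C₀ := by positivity
  have hC₀1 : 1 ≤ C₀ := by
    rw [hC₀def]
    have h9 : 0 < 1 / (2-α) := by positivity
    linarith
  -- Step E
  have hE : ∀ t ∈ Ioc (0:ℝ) b, H t - t * deriv H t ≤ C₀ * (t ^ (2-α) * H t ^ (α-1)) := by
    intro t ht
    have hHt := hH_pos t ht
    have htp0 : (0:ℝ) < t := ht.1
    have hwcont : ContinuousOn (fun s => H s - s * deriv H s) (Ioc (0:ℝ) t) := by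
      intro x hx
      have hx' : x ∈ Ioc (0:ℝ) b := ⟨hx.1, hx.2.trans ht.2⟩
      exact ((hwd x hx').continuousAt).continuousWithinAt
    have hsubset : Ioc (0:ℝ) t ⊆ Ioc (0:ℝ) b := fun x hx => ⟨hx.1, hx.2.trans ht.2⟩
    have htpow : (0:ℝ) < t ^ (2-α) * H t ^ (α-1) := by positivity
    rcases le_or_gt α 1 with hle | hgt
    · -- α ≤ 1 : F s = (t^(1-α) * H t^(α-1)) * s
      set M : ℝ := t ^ (1-α) * H t ^ (α-1) with hMdef
      have hMd : ∀ x : ℝ, HasDerivAt (fun s : ℝ => M * s) M x := by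
        intro x
        simpa using (hasDerivAt_id x).const_mul M
      have hg : MonotoneOn (fun s => M * s - (H s - s * deriv H s)) (Ioc 0 t) := by
        apply monotoneOn_of_deriv_nonneg (convex_Ioc 0 t)
        · exact (continuousOn_const.mul continuousOn_id).sub hwcont
        · intro x hx
          rw [interior_Ioc] at hx
          have hx' : x ∈ Ioc (0:ℝ) b := hsubset ⟨hx.1, hx.2.le⟩
          exact ((hMd x).sub (hwd x hx')).differentiableAt.differentiableWithinAt
        · intro x hx
          rw [interior_Ioc] at hx
          have hx' : x ∈ Ioc (0:ℝ) b := hsubset ⟨hx.1, hx.2.le⟩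
          have hxp : (0:ℝ) < x := hx.1
          have hHx := hH_pos x hx'
          rw [show deriv (fun s => M * s - (H s - s * deriv H s)) x = _ from
            ((hMd x).sub (hwd x hx')).deriv]
          have hyx : H t / t * x ≤ H x := by
            have := hyanti (hsubset ⟨hx.1, hx.2.le⟩) ht hx.2.le
            calc H t / t * x ≤ H x / x * x := by
                  exact mul_le_mul_of_nonneg_right this hxp.le
              _ = H x := by field_simp
          have hyxpos : (0:ℝ) < H t / t * x := by positivity
          have hb1' : H x ^ (α-1) ≤ (H t / t * x) ^ (α-1) :=
            Real.rpow_le_rpow_of_nonpos hyxpos hyx (by linarith)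
          have e0 : (H t / t * x) ^ (α-1) = H t ^ (α-1) * (t ^ (α-1))⁻¹ * x ^ (α-1) := by
            rw [Real.mul_rpow (by positivity) hxp.le, Real.div_rpow hHt.le (ht.1.le)]
            ring
          have e1 : x * x ^ (-α) * x ^ (α-1) = (1:ℝ) := by
            rw [show x * x ^ (-α) * x ^ (α-1)
                = x ^ (1:ℝ) * x ^ (-α) * x ^ (α-1) by rw [Real.rpow_one],
              ← Real.rpow_add hxp, ← Real.rpow_add hxp,
              show (1:ℝ) + -α + (α-1) = 0 by ring, Real.rpow_zero]
          have e2 : (t ^ (α-1))⁻¹ = t ^ (1-α) := by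
            rw [← Real.rpow_neg ht.1.le]
            norm_num
          have hxx : x * (x ^ (-α) * H x ^ (α-1)) ≤ M := by
            calc x * (x ^ (-α) * H x ^ (α-1))
                ≤ x * (x ^ (-α) * ((H t / t * x) ^ (α-1))) := by
                  apply mul_le_mul_of_nonneg_left _ hxp.le
                  exact mul_le_mul_of_nonneg_left hb1' (Real.rpow_nonneg hxp.le _)
              _ = (x * x ^ (-α) * x ^ (α-1)) * (H t ^ (α-1) * (t ^ (α-1))⁻¹) := by
                  rw [e0]; ring
              _ = M := by rw [e1, e2, hMdef]; ring
          linarith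
      have hgt0 : Tendsto (fun s => M * s - (H s - s * deriv H s)) (𝓝[>] (0:ℝ)) (𝓝 0) := by
        have h1 : Tendsto (fun s : ℝ => M * s) (𝓝[>] (0:ℝ)) (𝓝 0) := by
          have : Tendsto (fun s : ℝ => M * s) (𝓝 0) (𝓝 (M * 0)) :=
            (continuous_const.mul continuous_id).tendsto 0
          simpa using this.mono_left nhdsWithin_le_nhds
        simpa using h1.sub hwt
      have h0 := hlim _ t ht.1 hg hgt0
      have eMt : M * t = t ^ (2-α) * H t ^ (α-1) := by
        have et : t ^ (1-α) * t = t ^ (2-α) := by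
          rw [show (2-α:ℝ) = (1-α) + 1 by ring, Real.rpow_add ht.1, Real.rpow_one]
        rw [hMdef, ← et]
        ring
      nlinarith
    · -- α > 1 : F s = (H t^(α-1)/(2-α)) * s^(2-α)
      set N : ℝ := H t ^ (α-1) / (2-α) with hNdef
      have hN : 0 < N := by positivity
      have hFd : ∀ x : ℝ, 0 < x → HasDerivAt (fun s : ℝ => N * s ^ (2-α))
          (N * ((2-α) * x ^ (2-α-1))) x := by
        intro x hxp
        exact (Real.hasDerivAt_rpow_const (Or.inl (ne_of_gt hxp))).const_mul N
      have hg : MonotoneOn (fun s => N * s ^ (2-α) - (H s - s * deriv H s)) (Ioc 0 t) := by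
        apply monotoneOn_of_deriv_nonneg (convex_Ioc 0 t)
        · intro x hx
          exact (((hFd x hx.1).continuousAt).continuousWithinAt).sub (hwcont x hx)
        · intro x hx
          rw [interior_Ioc] at hx
          have hx' : x ∈ Ioc (0:ℝ) b := hsubset ⟨hx.1, hx.2.le⟩
          exact ((hFd x hx.1).sub (hwd x hx')).differentiableAt.differentiableWithinAt
        · intro x hx
          rw [interior_Ioc] at hx
          have hx' : x ∈ Ioc (0:ℝ) b := hsubset ⟨hx.1, hx.2.le⟩
          have hxp : (0:ℝ) < x := hx.1
          have hHx := hH_pos x hx'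
          rw [show deriv (fun s => N * s ^ (2-α) - (H s - s * deriv H s)) x = _ from
            ((hFd x hx.1).sub (hwd x hx')).deriv]
          have hHxt : H x ≤ H t := by
            have := hSM ⟨hxp.le, hx'.2⟩ ⟨ht.1.le, ht.2⟩ hx.2
            linarith
          have hb1' : H x ^ (α-1) ≤ H t ^ (α-1) :=
            Real.rpow_le_rpow hHx.le hHxt (by linarith)
          have e1 : x * x ^ (-α) = x ^ (2-α-1) := by
            rw [show (2-α-1:ℝ) = 1 + -α by ring, Real.rpow_add hxp, Real.rpow_one]
          have eN : N * (2-α) = H t ^ (α-1) := by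
            rw [hNdef]; field_simp
          have hxx : x * (x ^ (-α) * H x ^ (α-1)) ≤ N * ((2-α) * x ^ (2-α-1)) := by
            calc x * (x ^ (-α) * H x ^ (α-1)) = x ^ (2-α-1) * H x ^ (α-1) := by
                  rw [← e1]; ring
              _ ≤ x ^ (2-α-1) * H t ^ (α-1) := by
                  exact mul_le_mul_of_nonneg_left hb1' (Real.rpow_nonneg hxp.le _)
              _ = N * ((2-α) * x ^ (2-α-1)) := by rw [← eN]; ring
          linarith
      have hgt0 : Tendsto (fun s => N * s ^ (2-α) - (H s - s * deriv H s)) (𝓝[>] (0:ℝ)) (𝓝 0) := by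
        have h1 : Tendsto (fun s : ℝ => N * s ^ (2-α)) (𝓝[>] (0:ℝ)) (𝓝 0) := by
          have hc : ContinuousAt (fun s : ℝ => s ^ (2-α)) 0 :=
            Real.continuousAt_rpow_const 0 (2-α) (Or.inr h2α.le)
          have : Tendsto (fun s : ℝ => N * s ^ (2-α)) (𝓝 0) (𝓝 (N * (0:ℝ) ^ (2-α))) :=
            (continuousAt_const.mul hc).tendsto
          rw [Real.zero_rpow (ne_of_gt h2α), mul_zero] at this
          exact this.mono_left nhdsWithin_le_nhds
        simpa using h1.sub hwt
      have h0 := hlim _ t ht.1 hg hgt0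
      have hC : 1 / (2-α) ≤ C₀ := by rw [hC₀def]; linarith
      calc H t - t * deriv H t ≤ N * t ^ (2-α) := by linarith
        _ = 1/(2-α) * (t ^ (2-α) * H t ^ (α-1)) := by rw [hNdef]; ring
        _ ≤ C₀ * (t ^ (2-α) * H t ^ (α-1)) := mul_le_mul_of_nonneg_right hC htpow.le
  -- the monotone functional ψ
  set C₁ : ℝ := (2-α) * C₀ with hC₁def
  have hC₁ : 0 < C₁ := mul_pos h2α hC₀
  have hψd : ∀ x ∈ Ioc (0:ℝ) b, HasDerivAt (fun s => (H s / s) ^ (2-α) + C₁ * Real.log s)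
      ((deriv H x * x - H x * 1) / x ^ 2 * (2-α) * (H x / x) ^ (2-α-1) + C₁ * x⁻¹) x := by
    intro x hx
    have hyx : (0:ℝ) < H x / x := div_pos (hH_pos x hx) hx.1
    exact ((hyd x hx).rpow_const (Or.inl (ne_of_gt hyx))).add
      ((Real.hasDerivAt_log (ne_of_gt hx.1)).const_mul C₁)
  have hψmono : MonotoneOn (fun s => (H s / s) ^ (2-α) + C₁ * Real.log s) (Ioc (0:ℝ) b) := by
    apply monotoneOn_of_deriv_nonneg (convex_Ioc 0 b)
    · intro x hx
      exact ((hψd x hx).continuousAt).continuousWithinAt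
    · intro x hx
      rw [interior_Ioc] at hx
      exact (hψd x ⟨hx.1, hx.2.le⟩).differentiableAt.differentiableWithinAt
    · intro x hx
      rw [interior_Ioc] at hx
      have hx' : x ∈ Ioc (0:ℝ) b := ⟨hx.1, hx.2.le⟩
      have hxp : (0:ℝ) < x := hx.1
      have hHx := hH_pos x hx'
      have hyx : (0:ℝ) < H x / x := div_pos hHx hxp
      rw [(hψd x hx').deriv]
      have hEx := hE x hx'
      have hx2 : (0:ℝ) < x ^ 2 := by positivity
      have e1 : (H x / x) ^ (2-α-1) = H x ^ (1-α) * (x ^ (1-α))⁻¹ := by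
        rw [show (2-α-1 : ℝ) = 1-α by ring, Real.div_rpow hHx.le hxp.le]
        rfl
      have e2 : H x ^ (α-1) * H x ^ (1-α) = 1 := by
        rw [← Real.rpow_add hHx]
        norm_num
      have e3 : x ^ (2-α) * (x ^ (1-α))⁻¹ = x := by
        rw [← Real.rpow_neg hxp.le, ← Real.rpow_add hxp]
        norm_num
      have hpos : (0:ℝ) ≤ (2-α) * (H x ^ (1-α) * (x ^ (1-α))⁻¹) := by positivity
      have key : (H x - x * deriv H x) * ((2-α) * (H x ^ (1-α) * (x ^ (1-α))⁻¹)) ≤ C₁ * x := by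
        calc (H x - x * deriv H x) * ((2-α) * (H x ^ (1-α) * (x ^ (1-α))⁻¹))
            ≤ C₀ * (x ^ (2-α) * H x ^ (α-1)) * ((2-α) * (H x ^ (1-α) * (x ^ (1-α))⁻¹)) :=
              mul_le_mul_of_nonneg_right hEx hpos
          _ = (2-α) * C₀ * ((x ^ (2-α) * (x ^ (1-α))⁻¹) * (H x ^ (α-1) * H x ^ (1-α))) := by
              ring
          _ = C₁ * x := by rw [e2, e3, hC₁def]; ring
      have h5 : (H x - x * deriv H x) * ((2-α) * (H x ^ (1-α) * (x ^ (1-α))⁻¹)) / x ^ 2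
          ≤ C₁ * x⁻¹ := by
        rw [div_le_iff₀ hx2]
        calc (H x - x * deriv H x) * ((2-α) * (H x ^ (1-α) * (x ^ (1-α))⁻¹)) ≤ C₁ * x := key
          _ = C₁ * x⁻¹ * x ^ 2 := by field_simp
      rw [e1]
      have h7 : (deriv H x * x - H x * 1) / x ^ 2 * (2-α) * (H x ^ (1-α) * (x ^ (1-α))⁻¹)
          = -((H x - x * deriv H x) * ((2-α) * (H x ^ (1-α) * (x ^ (1-α))⁻¹)) / x ^ 2) := by
        ring
      rw [h7]
      linarith
  -- conclusion
  have hδb : (0:ℝ) < b/2 := by linarith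
  have hδb2 : b/2 < b := by linarith
  have hδ1 : b/2 < 1 := by linarith
  have hL : 0 < -Real.log (b/2) := by
    have := Real.log_neg hδb hδ1
    linarith
  have hyb : (0:ℝ) < H b / b := div_pos (hH_pos b ⟨hb, le_refl b⟩) hb
  set K : ℝ := (H b / b) ^ (2-α) / (-Real.log (b/2)) + C₁ with hKdef
  have hK : 0 < K :=
    add_pos_of_nonneg_of_pos (div_nonneg (Real.rpow_nonneg hyb.le _) hL.le) hC₁
  refine ⟨K ^ (1/(2-α)), Real.rpow_pos_of_pos hK _, b/2, ⟨hδb, hδb2⟩, ?_⟩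
  intro t ht
  have htb : t ∈ Ioc (0:ℝ) b := ⟨ht.1, ht.2.trans hδb2.le⟩
  have htp : (0:ℝ) < t := ht.1
  have hyt : (0:ℝ) < H t / t := div_pos (hH_pos t htb) htp
  have hψle := hψmono htb ⟨hb, le_refl b⟩ htb.2
  simp only [] at hψle
  have hlogb : Real.log b < 0 := Real.log_neg hb hb1
  have hlogt : Real.log t ≤ Real.log (b/2) := Real.log_le_log htp ht.2
  have h2 : 0 < -Real.log t := by linarith
  have h3 : (H b / b) ^ (2-α) ≤ (H b / b) ^ (2-α) / (-Real.log (b/2)) * (-Real.log t) := by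
    rw [div_mul_eq_mul_div, le_div_iff₀ hL]
    exact mul_le_mul_of_nonneg_left (by linarith) (Real.rpow_nonneg hyb.le _)
  have h4 : C₁ * Real.log b ≤ 0 := mul_nonpos_of_nonneg_of_nonpos hC₁.le hlogb.le
  have hKt : (H t / t) ^ (2-α) ≤ K * (-Real.log t) := by
    rw [hKdef]
    nlinarith [hψle, h3, h4]
  have h5 : ((H t / t) ^ (2-α)) ^ (1/(2-α)) ≤ (K * (-Real.log t)) ^ (1/(2-α)) :=
    Real.rpow_le_rpow (Real.rpow_nonneg hyt.le _) hKt (by positivity)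
  rw [← Real.rpow_mul hyt.le, mul_one_div, div_self (ne_of_gt h2α), Real.rpow_one,
    Real.mul_rpow hK.le h2.le] at h5
  calc H t = H t / t * t := by field_simp
    _ ≤ K ^ (1/(2-α)) * (-Real.log t) ^ (1/(2-α)) * t :=
        mul_le_mul_of_nonneg_right h5 htp.le
    _ = K ^ (1/(2-α)) * t * (-Real.log t) ^ (1/(2-α)) := by ring
end

section
/- Let α ∈ (0,2) with α + β = 1 and H as above satisfying H(t) ≤ c₂ t (−ln t)^{1/(2−α)} near 0. Then there exist c₄ > 0 and δ₄ > 0 such that H(t) ≥ c₄ t (−ln t)^{1/(2−α)} for all 0 < t ≤ δ₄. -/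
open Set

private lemma bll_step
    (α b : ℝ) (H : ℝ → ℝ)
    (hH'_pos : ∀ t ∈ Ioc (0:ℝ) b, 0 < deriv H t)
    (hH'' : ∀ t ∈ Ioc (0:ℝ) b,
      HasDerivAt (deriv H) (-(t ^ (-α) * (H t) ^ (α - 1))) t)
    (hTH : ∀ t ∈ Ioc (0:ℝ) b, t * deriv H t ≤ H t)
    (δ : ℝ) (hδ0 : 0 < δ) (hδb : δ ≤ b) (hδe : δ ≤ Real.exp (-1))
    (c μ : ℝ) (hc : 0 < c) (hμ : (1:ℝ)/2 ≤ μ + 1)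
    (hlow : ∀ s ∈ Ioc (0:ℝ) δ, c * s⁻¹ * (-Real.log s) ^ μ ≤ s ^ (-α) * H s ^ (α - 1)) :
    ∀ t ∈ Ioc (0:ℝ) (δ^4), c / (2*(μ+1)) * t * (-Real.log t) ^ (μ+1) ≤ H t := by
  have hδ1 : δ < 1 := lt_of_le_of_lt hδe (by
    have := Real.exp_lt_one_iff.mpr (show (-1:ℝ) < 0 by norm_num)
    exact this)
  have hLδ1 : 1 ≤ -Real.log δ := by
    have : Real.log δ ≤ -1 := (Real.log_le_iff_le_exp hδ0).mpr hδe
    linarith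
  have hμ0 : 0 < μ + 1 := lt_of_lt_of_le (by norm_num) hμ
  -- pointwise facts on (0, δ]
  have hLpos : ∀ s ∈ Ioc (0:ℝ) δ, 1 ≤ -Real.log s := by
    intro s hs
    have : Real.log s ≤ Real.log δ := Real.log_le_log hs.1 hs.2
    linarith
  intro t ht
  obtain ⟨ht0, htδ4⟩ := ht
  have hδ41 : δ^4 < δ := by
    have h3 : δ^3 < 1 := pow_lt_one₀ hδ0.le hδ1 (by norm_num)
    nlinarith
  have htδ : t < δ := lt_of_le_of_lt htδ4 hδ41
  have htb : t ∈ Ioc (0:ℝ) b := ⟨ht0, le_trans htδ.le hδb⟩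
  have hLt1 : 1 ≤ -Real.log t := hLpos t ⟨ht0, htδ.le⟩
  have hLt4 : 4 * (-Real.log δ) ≤ -Real.log t := by
    have h1 : Real.log t ≤ Real.log (δ^4) := Real.log_le_log ht0 htδ4
    rw [Real.log_pow] at h1
    push_cast at h1
    linarith
  set c' : ℝ := c / (μ + 1) with hc'
  have hc'0 : 0 < c' := div_pos hc hμ0
  set G : ℝ → ℝ := fun s => deriv H s - c' * (-Real.log s) ^ (μ+1) with hG
  set g : ℝ → ℝ := fun s => -(s ^ (-α) * H s ^ (α - 1)) + c * s⁻¹ * (-Real.log s) ^ μ with hg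
  have hGd : ∀ s ∈ Icc t δ, HasDerivAt G (g s) s := by
    intro s hs
    have hs0 : 0 < s := lt_of_lt_of_le ht0 hs.1
    have hsδ : s ∈ Ioc (0:ℝ) δ := ⟨hs0, hs.2⟩
    have hsb : s ∈ Ioc (0:ℝ) b := ⟨hs0, le_trans hs.2 hδb⟩
    have hLs : 1 ≤ -Real.log s := hLpos s hsδ
    have h1 : HasDerivAt (fun u => -Real.log u) (-s⁻¹) s :=
      (Real.hasDerivAt_log (ne_of_gt hs0)).neg
    have h2 : HasDerivAt (fun u => (-Real.log u) ^ (μ+1))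
        (-s⁻¹ * (μ+1) * (-Real.log s) ^ (μ+1-1)) s :=
      h1.rpow_const (Or.inl (by linarith))
    have h3 := (hH'' s hsb).sub (h2.const_mul c')
    convert h3 using 1
    case e'_4 => rfl
    case e'_5 => rfl
    case e'_8 => rfl
    have : μ + 1 - 1 = μ := by ring
    rw [this]
    have hcc : c' * (μ + 1) = c := by rw [hc', div_mul_cancel₀ c hμ0.ne']
    linear_combination (-(s⁻¹ * (-Real.log s) ^ μ)) * hcc
  have hGc : ContinuousOn G (Icc t δ) := fun s hs => ((hGd s hs).continuousAt).continuousWithinAt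
  obtain ⟨ξ, hξ, hsl⟩ := exists_hasDerivAt_eq_slope G g htδ hGc
    (fun x hx => hGd x ⟨hx.1.le, hx.2.le⟩)
  have hgξ : g ξ ≤ 0 := by
    have hξδ : ξ ∈ Ioc (0:ℝ) δ := ⟨lt_trans ht0 hξ.1, hξ.2.le⟩
    have := hlow ξ hξδ
    simp only [hg]
    linarith
  have hGmono : G δ ≤ G t := by
    have hdpos : 0 < δ - t := by linarith
    have h1 : (G δ - G t) / (δ - t) ≤ 0 := hsl ▸ hgξ
    have h2 := (div_le_iff₀ hdpos).mp h1
    linarith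
  -- so deriv H t ≥ c' * ( Lt^(μ+1) - Lδ^(μ+1) ) + deriv H δ
  have hHd : c' * ((-Real.log t) ^ (μ+1) - (-Real.log δ) ^ (μ+1)) ≤ deriv H t := by
    have h := hGmono
    simp only [hG] at h
    have := hH'_pos δ ⟨hδ0, hδb⟩
    nlinarith
  have hkey : 2 * (-Real.log δ) ^ (μ+1) ≤ (-Real.log t) ^ (μ+1) := by
    have h1 : (4 * (-Real.log δ)) ^ (μ+1) ≤ (-Real.log t) ^ (μ+1) :=
      Real.rpow_le_rpow (by positivity) hLt4 hμ0.le
    rw [Real.mul_rpow (by norm_num) (by linarith)] at h1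
    have h2 : (2:ℝ) ≤ (4:ℝ) ^ (μ+1) := by
      have : (4:ℝ) ^ ((1:ℝ)/2) ≤ (4:ℝ) ^ (μ+1) :=
        Real.rpow_le_rpow_of_exponent_le (by norm_num) hμ
      have h4 : (4:ℝ) ^ ((1:ℝ)/2) = 2 := by
        rw [show (4:ℝ) = 2^(2:ℕ) by norm_num, ← Real.rpow_natCast 2 2, ← Real.rpow_mul (by norm_num)]
        norm_num
      linarith
    nlinarith [Real.rpow_nonneg (show (0:ℝ) ≤ -Real.log δ by linarith) (μ+1)]
  have hHd2 : c' / 2 * (-Real.log t) ^ (μ+1) ≤ deriv H t := by nlinarith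
  have := hTH t htb
  have hfin : c / (2*(μ+1)) * t * (-Real.log t) ^ (μ+1) = t * (c'/2 * (-Real.log t) ^ (μ+1)) := by
    have hne : (μ+1) ≠ 0 := hμ0.ne'
    rw [hc']; field_simp
  rw [hfin]
  calc t * (c'/2 * (-Real.log t) ^ (μ+1)) ≤ t * deriv H t := by
        apply mul_le_mul_of_nonneg_left hHd2 ht0.le
    _ ≤ H t := this
private lemma bll_mulstep (α c s X Y : ℝ) (hs0 : 0 < s)
    (h : c * s ^ (α-1) * X ≤ Y) : c * s⁻¹ * X ≤ s ^ (-α) * Y := by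
  have h5 : s ^ (-α) * (c * s ^ (α-1) * X) ≤ s ^ (-α) * Y :=
    mul_le_mul_of_nonneg_left h (Real.rpow_nonneg hs0.le _)
  have h8 : s ^ (-α) * s ^ (α-1) = s⁻¹ := by
    rw [← Real.rpow_add hs0, show -α + (α-1) = -1 by ring, Real.rpow_neg_one]
  calc c * s⁻¹ * X = s ^ (-α) * (c * s ^ (α-1) * X) := by rw [← h8]; ring
    _ ≤ s ^ (-α) * Y := h5

set_option maxHeartbeats 1600000 in
theorem borderline_lower_bound
    (α : ℝ) (hα : α ∈ Ioo (0:ℝ) 2)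
    (b : ℝ) (hb : 0 < b) (hb1 : b < 1) (H : ℝ → ℝ)
    (hH_cont : ContinuousOn H (Icc 0 b))
    (hH0 : H 0 = 0)
    (hH_pos : ∀ t ∈ Ioc (0:ℝ) b, 0 < H t)
    (hH'_pos : ∀ t ∈ Ioc (0:ℝ) b, 0 < deriv H t)
    (hH' : ∀ t ∈ Ioc (0:ℝ) b, HasDerivAt H (deriv H t) t)
    (hH'' : ∀ t ∈ Ioc (0:ℝ) b,
      HasDerivAt (deriv H) (-(t ^ (-α) * (H t) ^ (α - 1))) t)
    (hconc : AntitoneOn (deriv H) (Ioc 0 b))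
    (c₂ : ℝ) (hc₂ : 0 < c₂) (δ₂ : ℝ) (hδ₂ : δ₂ ∈ Ioo (0:ℝ) b)
    (hupper : ∀ t ∈ Ioc (0:ℝ) δ₂, H t ≤ c₂ * t * (-Real.log t) ^ (1 / (2 - α))) :
    ∃ c₄ > (0:ℝ), ∃ δ₄ > (0:ℝ), ∀ t ∈ Ioc (0:ℝ) δ₄,
      c₄ * t * (-Real.log t) ^ (1 / (2 - α)) ≤ H t := by
  obtain ⟨hα0, hα2⟩ := hα
  have h2α : 0 < 2 - α := by linarith
  set g : ℝ := (2 - α)⁻¹ with hgdef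
  have hg0 : 0 < g := inv_pos.mpr h2α
  have hg2 : 1/2 ≤ g := by
    rw [hgdef]
    rw [le_inv_comm₀ (by norm_num) h2α]
    linarith
  have hgid : g * (2 - α) = 1 := inv_mul_cancel₀ h2α.ne'
  have hone : 1 / (2 - α) = g := one_div _
  -- H t ≥ t * H'(t)
  have hTH : ∀ t ∈ Ioc (0:ℝ) b, t * deriv H t ≤ H t := by
    intro t ht
    obtain ⟨ξ, hξ, hv⟩ := exists_hasDerivAt_eq_slope H (deriv H) ht.1
      (hH_cont.mono (Icc_subset_Icc le_rfl ht.2))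
      (fun x hx => hH' x ⟨hx.1, hx.2.le.trans ht.2⟩)
    rw [hH0, sub_zero, sub_zero] at hv
    have h1 : deriv H t ≤ deriv H ξ := hconc ⟨hξ.1, hξ.2.le.trans ht.2⟩ ht hξ.2.le
    have h2 : t * deriv H ξ = H t := by
      rw [hv]; field_simp [ht.1.ne']
    nlinarith [ht.1]
  set δ : ℝ := min δ₂ (Real.exp (-1)) with hδdef
  have hδ0 : 0 < δ := lt_min hδ₂.1 (Real.exp_pos _)
  have hδδ₂ : δ ≤ δ₂ := min_le_left _ _
  have hδe : δ ≤ Real.exp (-1) := min_le_right _ _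
  have hδb : δ ≤ b := le_trans hδδ₂ hδ₂.2.le
  have hδ1 : δ < 1 := lt_of_le_of_lt hδe (Real.exp_lt_one_iff.mpr (by norm_num))
  have hLδ1 : 1 ≤ -Real.log δ := by
    have : Real.log δ ≤ -1 := (Real.log_le_iff_le_exp hδ0).mpr hδe
    linarith
  have hLpos : ∀ s ∈ Ioc (0:ℝ) δ, 1 ≤ -Real.log s := by
    intro s hs
    have : Real.log s ≤ Real.log δ := Real.log_le_log hs.1 hs.2
    linarith
  have hHδ : 0 < H δ := hH_pos δ ⟨hδ0, hδb⟩
  -- slope bound: H t ≥ (H δ / δ) t on (0, δ]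
  have hslope : ∀ t ∈ Ioc (0:ℝ) δ, H δ / δ * t ≤ H t := by
    intro t ht
    rcases eq_or_lt_of_le ht.2 with heq | hlt
    · rw [heq, div_mul_cancel₀ _ hδ0.ne']
    · obtain ⟨ξ, hξ, hv⟩ := exists_hasDerivAt_eq_slope H (deriv H) hlt
        (hH_cont.mono (Icc_subset_Icc ht.1.le hδb))
        (fun x hx => hH' x ⟨lt_trans ht.1 hx.1, hx.2.le.trans hδb⟩)
      have htb : t ∈ Ioc (0:ℝ) b := ⟨ht.1, le_trans ht.2 hδb⟩
      have h1 : deriv H ξ ≤ deriv H t := hconc htb ⟨lt_trans ht.1 hξ.1, hξ.2.le.trans hδb⟩ hξ.1.le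
      have h2 : t * deriv H t ≤ H t := hTH t htb
      have h3 : (H δ - H t) / (δ - t) ≤ H t / t := by
        rw [← hv]
        calc deriv H ξ ≤ deriv H t := h1
          _ ≤ H t / t := by rw [le_div_iff₀ ht.1]; linarith
      rw [div_le_div_iff₀ (by linarith) ht.1] at h3
      rw [div_mul_eq_mul_div, div_le_iff₀ hδ0]
      nlinarith
  rcases le_or_gt 1 α with hα1 | hα1
  · -- case 1 ≤ α < 2 : bootstrap
    have hα1' : 0 ≤ α - 1 := by linarith
    have hα11 : α - 1 < 1 := by linarith
    set K : ℝ := 4 * (-Real.log δ) with hKdef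
    have hK1 : 1 ≤ K := by rw [hKdef]; linarith
    have hK0 : 0 < K := by linarith
    set c₀ : ℝ := min (H δ / δ * K ^ (-g)) ((2*g) ^ (-g)) with hc₀def
    have hKg : 0 < K ^ (-g) := Real.rpow_pos_of_pos hK0 _
    have hc₀0 : 0 < c₀ := lt_min (mul_pos (div_pos hHδ hδ0) hKg)
      (Real.rpow_pos_of_pos (by linarith) _)
    have hc₀a : c₀ ≤ H δ / δ * K ^ (-g) := min_le_left _ _
    have hc₀b : c₀ ≤ (2*g) ^ (-g) := min_le_right _ _
    have hc₀HD : c₀ ≤ H δ / δ := by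
      have h1 : K ^ (-g) ≤ 1 := Real.rpow_le_one_of_one_le_of_nonpos hK1 (by linarith)
      have h2 : H δ / δ * K ^ (-g) ≤ H δ / δ * 1 :=
        mul_le_mul_of_nonneg_left h1 (div_pos hHδ hδ0).le
      rw [mul_one] at h2
      linarith
    set γ : ℕ → ℝ := fun n => g * (1 - (α-1)^n) with hγdef
    have hγ0 : ∀ n, 0 ≤ γ n := by
      intro n
      have h1 : (α-1)^n ≤ 1 := pow_le_one₀ hα1' (by linarith)
      exact mul_nonneg hg0.le (by linarith)
    have hγg : ∀ n, γ n ≤ g := by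
      intro n
      have h1 : 0 ≤ (α-1)^n := pow_nonneg hα1' n
      simp only [hγdef]
      nlinarith
    have hind : ∀ n, ∀ s ∈ Ioc (0:ℝ) δ, c₀ * s * (-Real.log s) ^ (γ n) ≤ H s := by
      intro n
      induction n with
      | zero =>
        intro s hs
        have hγz : γ 0 = 0 := by simp [hγdef]
        rw [hγz, Real.rpow_zero, mul_one]
        have h1 := hslope s hs
        have h2 : c₀ * s ≤ H δ / δ * s := mul_le_mul_of_nonneg_right hc₀HD hs.1.le
        linarith
      | succ n ih =>
        set μ : ℝ := γ n * (α - 1) with hμdef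
        have hμ0 : 0 ≤ μ := mul_nonneg (hγ0 n) hα1'
        have hμγ : μ + 1 = γ (n+1) := by
          rw [hμdef]; simp only [hγdef]; rw [pow_succ]
          linear_combination -hgid
        have hμg : μ + 1 ≤ g := hμγ ▸ hγg (n+1)
        set c : ℝ := c₀ ^ (α - 1) with hcdef
        have hcpos : 0 < c := Real.rpow_pos_of_pos hc₀0 _
        have hlow : ∀ s ∈ Ioc (0:ℝ) δ,
            c * s⁻¹ * (-Real.log s) ^ μ ≤ s ^ (-α) * H s ^ (α - 1) := by
          intro s hs
          have hs0 : 0 < s := hs.1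
          have hLs : 1 ≤ -Real.log s := hLpos s hs
          have hLs0 : (0:ℝ) ≤ -Real.log s := by linarith
          have h1 : (c₀ * s * (-Real.log s) ^ (γ n)) ^ (α-1) ≤ H s ^ (α-1) :=
            Real.rpow_le_rpow (by positivity) (ih s hs) hα1'
          have hexp : (c₀ * s * (-Real.log s) ^ (γ n)) ^ (α - 1)
              = c * s ^ (α - 1) * (-Real.log s) ^ μ := by
            rw [Real.mul_rpow (mul_nonneg hc₀0.le hs0.le) (Real.rpow_nonneg hLs0 _),
                Real.mul_rpow hc₀0.le hs0.le, ← Real.rpow_mul hLs0, hcdef, hμdef]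
          rw [hexp] at h1
          exact bll_mulstep α c s _ _ hs0 h1
        have hstep := bll_step α b H hH'_pos hH'' hTH δ hδ0 hδb hδe c μ hcpos
          (by linarith) hlow
        have h2g : (0:ℝ) < 2*(μ+1) := by linarith
        have hcc : c₀ * (2*(μ+1)) ≤ c := by
          have h1 : ((2*g) ^ (-g)) ^ (α-2) ≤ c₀ ^ (α-2) :=
            Real.rpow_le_rpow_of_nonpos hc₀0 hc₀b (by linarith)
          have h2 : ((2*g) ^ (-g)) ^ (α-2) = 2*g := by
            rw [← Real.rpow_mul (by linarith : (0:ℝ) ≤ 2*g),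
              show (-g) * (α-2) = 1 by linear_combination hgid, Real.rpow_one]
          have h3 : 2*g ≤ c₀ ^ (α-2) := h2 ▸ h1
          have h4 : c₀ ^ (α-2) * c₀ = c := by
            rw [hcdef, show α - 1 = (α-2) + 1 by ring, Real.rpow_add hc₀0, Real.rpow_one]
          calc c₀ * (2*(μ+1)) ≤ c₀ * (2*g) :=
                mul_le_mul_of_nonneg_left (by linarith) hc₀0.le
            _ ≤ c₀ * c₀ ^ (α-2) := mul_le_mul_of_nonneg_left h3 hc₀0.le
            _ = c := by rw [mul_comm]; exact h4
        intro s hs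
        rcases le_or_gt s (δ^4) with hsmall | hbig
        · have h1 := hstep s ⟨hs.1, hsmall⟩
          have hLs : 1 ≤ -Real.log s := hLpos s hs
          have h2 : c₀ * s * (-Real.log s) ^ (μ+1)
              ≤ c / (2*(μ+1)) * s * (-Real.log s) ^ (μ+1) := by
            apply mul_le_mul_of_nonneg_right _ (Real.rpow_nonneg (by linarith) _)
            apply mul_le_mul_of_nonneg_right _ hs.1.le
            rw [le_div_iff₀ h2g]
            exact hcc
          rw [← hμγ]
          linarith
        · have h1 := hslope s hs
          have hLs : 1 ≤ -Real.log s := hLpos s hs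
          have hLsK : -Real.log s ≤ K := by
            have h7 : Real.log (δ^4) ≤ Real.log s := Real.log_le_log (pow_pos hδ0 4) hbig.le
            rw [Real.log_pow] at h7
            push_cast at h7
            rw [hKdef]
            linarith
          have h2 : (-Real.log s) ^ (γ (n+1)) ≤ K ^ g := by
            calc (-Real.log s) ^ (γ (n+1)) ≤ K ^ (γ (n+1)) :=
                  Real.rpow_le_rpow (by linarith) hLsK (hγ0 _)
              _ ≤ K ^ g := Real.rpow_le_rpow_of_exponent_le hK1 (hγg _)
          have h3 : c₀ * K ^ g ≤ H δ / δ := by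
            have h4 : c₀ * K ^ g ≤ (H δ / δ * K ^ (-g)) * K ^ g :=
              mul_le_mul_of_nonneg_right hc₀a (Real.rpow_nonneg hK0.le _)
            have h5 : K ^ (-g) * K ^ g = 1 := by
              rw [← Real.rpow_add hK0, neg_add_cancel, Real.rpow_zero]
            have h6 : (H δ / δ * K ^ (-g)) * K ^ g = H δ / δ := by
              rw [mul_assoc, h5, mul_one]
            linarith [h4, h6.le]
          calc c₀ * s * (-Real.log s) ^ (γ (n+1))
              ≤ c₀ * s * K ^ g := mul_le_mul_of_nonneg_left h2 (mul_nonneg hc₀0.le hs.1.le)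
            _ = (c₀ * K ^ g) * s := by ring
            _ ≤ (H δ / δ) * s := mul_le_mul_of_nonneg_right h3 hs.1.le
            _ ≤ H s := h1
    have hpow0 : Filter.Tendsto (fun n : ℕ => (α-1)^n) Filter.atTop (nhds 0) :=
      tendsto_pow_atTop_nhds_zero_of_lt_one hα1' hα11
    refine ⟨c₀, hc₀0, δ, hδ0, ?_⟩
    intro t ht
    rw [hone]
    have hLt : 1 ≤ -Real.log t := hLpos t ht
    have hLt0 : (0:ℝ) < -Real.log t := by linarith
    have h1 : Filter.Tendsto γ Filter.atTop (nhds g) := by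
      have h2 := ((tendsto_const_nhds (x := (1:ℝ)) (f := Filter.atTop)).sub hpow0).const_mul g
      simp only [sub_zero, mul_one] at h2
      exact h2
    have h2 : Filter.Tendsto (fun n => (-Real.log t) ^ (γ n)) Filter.atTop
        (nhds ((-Real.log t) ^ g)) := by
      have h3 : Filter.Tendsto (fun n => Real.exp (Real.log (-Real.log t) * γ n)) Filter.atTop
          (nhds (Real.exp (Real.log (-Real.log t) * g))) :=
        (Real.continuous_exp.tendsto _).comp (h1.const_mul _)
      simpa [Real.rpow_def_of_pos hLt0] using h3
    have htend : Filter.Tendsto (fun n => c₀ * t * (-Real.log t) ^ (γ n)) Filter.atTop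
        (nhds (c₀ * t * (-Real.log t) ^ g)) := by
      have h4 := h2.const_mul (c₀ * t)
      simpa [mul_assoc] using h4
    exact le_of_tendsto htend (Filter.Eventually.of_forall fun n => hind n t ht)
  -- case α < 1 : single step from the upper bound
  · set c : ℝ := c₂ ^ (α - 1) with hcdef
    have hcpos : 0 < c := Real.rpow_pos_of_pos hc₂ _
    set μ : ℝ := g - 1 with hμdef
    have hμ1 : μ + 1 = g := by ring
    have hlow : ∀ s ∈ Ioc (0:ℝ) δ, c * s⁻¹ * (-Real.log s) ^ μ ≤ s ^ (-α) * H s ^ (α - 1) := by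
      intro s hs
      have hs0 : 0 < s := hs.1
      have hsb : s ∈ Ioc (0:ℝ) b := ⟨hs0, le_trans hs.2 hδb⟩
      have hLs : 1 ≤ -Real.log s := hLpos s hs
      have hLs0 : (0:ℝ) ≤ -Real.log s := by linarith
      have hup := hupper s ⟨hs0, le_trans hs.2 hδδ₂⟩
      rw [hone] at hup
      have hkey : (c₂ * s * (-Real.log s) ^ g) ^ (α - 1) ≤ H s ^ (α - 1) :=
        Real.rpow_le_rpow_of_nonpos (hH_pos s hsb) hup (by linarith)
      have hμeq : g * (α - 1) = μ := by rw [hμdef]; linear_combination -hgid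
      have hexp : (c₂ * s * (-Real.log s) ^ g) ^ (α - 1)
          = c * s ^ (α - 1) * (-Real.log s) ^ μ := by
        rw [Real.mul_rpow (mul_nonneg hc₂.le hs0.le) (Real.rpow_nonneg hLs0 _),
            Real.mul_rpow hc₂.le hs0.le, ← Real.rpow_mul hLs0, hμeq, hcdef]
      rw [hexp] at hkey
      have h5 : s ^ (-α) * (c * s ^ (α-1) * (-Real.log s) ^ μ) ≤ s ^ (-α) * H s ^ (α-1) :=
        mul_le_mul_of_nonneg_left hkey (Real.rpow_nonneg hs0.le _)
      have h6 : s ^ (-α) * (c * s ^ (α-1) * (-Real.log s) ^ μ) = c * s⁻¹ * (-Real.log s) ^ μ := by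
        have h7 : -α + (α-1) = -1 := by ring
        have h8 : s ^ (-α) * s ^ (α-1) = s⁻¹ := by
          rw [← Real.rpow_add hs0, h7, Real.rpow_neg_one]
        calc s ^ (-α) * (c * s ^ (α-1) * (-Real.log s) ^ μ)
            = c * (s ^ (-α) * s ^ (α-1)) * (-Real.log s) ^ μ := by ring
          _ = c * s⁻¹ * (-Real.log s) ^ μ := by rw [h8]
      rw [h6] at h5
      exact h5
    have hstep := bll_step α b H hH'_pos hH'' hTH δ hδ0 hδb hδe c μ hcpos
      (by rw [hμ1]; exact hg2) hlow
    have hμ1pos : 0 < 2*(μ+1) := by rw [hμ1]; linarith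
    refine ⟨c / (2*(μ+1)), div_pos hcpos hμ1pos, δ^4, pow_pos hδ0 4, ?_⟩
    intro t ht
    rw [hone, ← hμ1]
    exact hstep t ht
end

section
/- Let α, β > 0 with α + β < 1 and let H ∈ C²(0,b] ∩ C[0,b] solve H''(t) = −t^{−α}H(t)^{−β}, H(0) = 0, H, H' > 0 on (0,b], H concave with H'(0⁺) ∈ (0,∞]. Then H'(0⁺) < ∞, H ∈ C¹[0,b], and there exist c₁, c₂ > 0 with c₁ t ≤ H(t) ≤ c₂ t for all 0 < t ≤ b. -/
open Set Filter

theorem subcritical_linear_behavior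
    (α β : ℝ) (hα : 0 < α) (hβ : 0 < β) (hαβ : α + β < 1)
    (b : ℝ) (hb : 0 < b) (H : ℝ → ℝ)
    (hH_cont : ContinuousOn H (Icc 0 b))
    (hH0 : H 0 = 0)
    (hH_pos : ∀ t ∈ Ioc (0:ℝ) b, 0 < H t)
    (hH'_pos : ∀ t ∈ Ioc (0:ℝ) b, 0 < deriv H t)
    (hH' : ∀ t ∈ Ioc (0:ℝ) b, HasDerivAt H (deriv H t) t)
    (hH'' : ∀ t ∈ Ioc (0:ℝ) b,
      HasDerivAt (deriv H) (-(t ^ (-α) * (H t) ^ (-β))) t)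
    (hconc : AntitoneOn (deriv H) (Ioc 0 b))
    (hH'0 : Tendsto (deriv H) (nhdsWithin 0 (Ioi 0)) atTop ∨
      ∃ L > (0:ℝ), Tendsto (deriv H) (nhdsWithin 0 (Ioi 0)) (nhds L)) :
    (∃ L : ℝ, Tendsto (deriv H) (nhdsWithin 0 (Ioi 0)) (nhds L)) ∧
    ∃ c₁ > (0:ℝ), ∃ c₂ > (0:ℝ), ∀ t ∈ Ioc (0:ℝ) b,
      c₁ * t ≤ H t ∧ H t ≤ c₂ * t := by
  -- Mean value slope representation
  have slope : ∀ t ∈ Ioc (0:ℝ) b, ∃ ξ ∈ Ioo (0:ℝ) t, H t = deriv H ξ * t := by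
    intro t ht
    obtain ⟨ht0, htb⟩ := ht
    obtain ⟨ξ, hξ, hs⟩ := exists_hasDerivAt_eq_slope H (deriv H) ht0
      (hH_cont.mono (Icc_subset_Icc le_rfl htb))
      (fun x hx => hH' x ⟨hx.1, hx.2.le.trans htb⟩)
    refine ⟨ξ, hξ, ?_⟩
    rw [hs, hH0]
    field_simp
    ring
  set c : ℝ := deriv H b with hc_def
  have hc : 0 < c := hH'_pos b ⟨hb, le_rfl⟩
  -- lower bound H t ≥ c t
  have hlow : ∀ t ∈ Ioc (0:ℝ) b, c * t ≤ H t := by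
    intro t ht
    obtain ⟨ξ, hξ, hs⟩ := slope t ht
    have hξmem : ξ ∈ Ioc (0:ℝ) b := ⟨hξ.1, hξ.2.le.trans ht.2⟩
    have : c ≤ deriv H ξ := hconc hξmem ⟨hb, le_rfl⟩ hξmem.2
    rw [hs]
    exact mul_le_mul_of_nonneg_right this ht.1.le
  -- bound the derivative on (0,b]
  set γ : ℝ := α + β with hγ_def
  have hγ : γ < 1 := hαβ
  have hγ0 : 0 < γ := by positivity
  set F : ℝ → ℝ := fun s => deriv H s + c ^ (-β) / (1 - γ) * s ^ (1 - γ) with hF_def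
  have hFd : ∀ x ∈ Ioo (0:ℝ) b, HasDerivAt F
      (-(x ^ (-α) * (H x) ^ (-β)) + c ^ (-β) / (1 - γ) * ((1 - γ) * x ^ (1 - γ - 1))) x := by
    intro x hx
    have hxb : x ∈ Ioc (0:ℝ) b := ⟨hx.1, hx.2.le⟩
    exact (hH'' x hxb).add
      (((Real.hasDerivAt_rpow_const (Or.inl hx.1.ne')).const_mul (c ^ (-β) / (1 - γ))))
  have hFd' : ∀ x ∈ Ioo (0:ℝ) b, 0 ≤
      -(x ^ (-α) * (H x) ^ (-β)) + c ^ (-β) / (1 - γ) * ((1 - γ) * x ^ (1 - γ - 1)) := by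
    intro x hx
    have hx0 : (0:ℝ) < x := hx.1
    have hxb : x ∈ Ioc (0:ℝ) b := ⟨hx.1, hx.2.le⟩
    have hHx : c * x ≤ H x := hlow x hxb
    have hcx : (0:ℝ) < c * x := by positivity
    have h1 : (H x) ^ (-β) ≤ (c * x) ^ (-β) :=
      Real.rpow_le_rpow_of_nonpos hcx hHx (by linarith)
    have h2 : (c * x) ^ (-β) = c ^ (-β) * x ^ (-β) :=
      Real.mul_rpow hc.le hx0.le
    have h3 : x ^ (1 - γ - 1) = x ^ (-α) * x ^ (-β) := by
      rw [← Real.rpow_add hx0]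
      ring_nf
      congr 1; rw [hγ_def]; ring
    have h4 : c ^ (-β) / (1 - γ) * ((1 - γ) * x ^ (1 - γ - 1))
        = x ^ (-α) * (c ^ (-β) * x ^ (-β)) := by
      have hne : (1:ℝ) - γ ≠ 0 := by linarith
      rw [h3]; field_simp
    rw [h4]
    have h5 : x ^ (-α) * (H x) ^ (-β) ≤ x ^ (-α) * (c ^ (-β) * x ^ (-β)) := by
      rw [← h2]
      exact mul_le_mul_of_nonneg_left h1 (Real.rpow_nonneg hx0.le _)
    linarith
  have hFcont : ContinuousOn F (Ioc 0 b) := by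
    intro x hx
    have h1 : ContinuousAt (deriv H) x := (hH'' x hx).continuousAt
    have h2 : ContinuousAt (fun s : ℝ => c ^ (-β) / (1 - γ) * s ^ (1 - γ)) x :=
      (Real.continuousAt_rpow_const x _ (Or.inl hx.1.ne')).const_mul _
    exact (h1.add h2).continuousWithinAt
  have hFmono : MonotoneOn F (Ioc 0 b) := by
    apply monotoneOn_of_deriv_nonneg (convex_Ioc 0 b) hFcont
    · intro x hx
      rw [interior_Ioc] at hx
      exact ((hFd x hx).differentiableAt).differentiableWithinAt
    · intro x hx
      rw [interior_Ioc] at hx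
      rw [(hFd x hx).deriv]
      exact hFd' x hx
  have hbound : ∀ s ∈ Ioc (0:ℝ) b, deriv H s ≤ F b := by
    intro s hs
    have hFs : F s ≤ F b := hFmono hs ⟨hb, le_rfl⟩ hs.2
    have : deriv H s ≤ F s := by
      have : 0 ≤ c ^ (-β) / (1 - γ) * s ^ (1 - γ) := by
        have h1 : (0:ℝ) < c ^ (-β) := Real.rpow_pos_of_pos hc _
        have h2 : (0:ℝ) ≤ s ^ (1 - γ) := Real.rpow_nonneg hs.1.le _
        have h3 : (0:ℝ) < 1 - γ := by linarith
        positivity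
      simp only [hF_def]
      linarith
    linarith
  -- rule out the atTop case
  obtain htop | ⟨L, hL0, hL⟩ := hH'0
  · exfalso
    have h1 : ∀ᶠ s in nhdsWithin (0:ℝ) (Ioi 0), F b < deriv H s :=
      htop.eventually (eventually_gt_atTop (F b))
    have h2 : Ioc (0:ℝ) b ∈ nhdsWithin (0:ℝ) (Ioi 0) :=
      Ioc_mem_nhdsGT_of_mem ⟨le_rfl, hb⟩
    obtain ⟨s, hs1, hs2⟩ := (h1.and (eventually_mem_set.mpr h2)).exists
    exact absurd (hbound s hs2) (not_le.mpr hs1)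
  · -- finite limit case
    have hLub : ∀ t ∈ Ioc (0:ℝ) b, deriv H t ≤ L := by
      intro t ht
      refine ge_of_tendsto hL ?_
      filter_upwards [eventually_mem_set.mpr
        (Ioc_mem_nhdsGT_of_mem (⟨le_rfl, ht.1⟩ : (0:ℝ) ∈ Ico 0 t))] with s hs
      exact hconc ⟨hs.1, hs.2.trans ht.2⟩ ht hs.2
    refine ⟨⟨L, hL⟩, c, hc, L, hL0, ?_⟩
    intro t ht
    refine ⟨hlow t ht, ?_⟩
    obtain ⟨ξ, hξ, hs⟩ := slope t ht
    have hξmem : ξ ∈ Ioc (0:ℝ) b := ⟨hξ.1, hξ.2.le.trans ht.2⟩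
    rw [hs]
    exact mul_le_mul_of_nonneg_right (hLub ξ hξmem) ht.1.le
end

section
/- Let p : (0,1) → (0,∞) be continuous, g : (0,∞) → (0,∞) continuous and decreasing with lim_{t→0⁺} g(t) = +∞, and suppose ∫₀¹ t(1−t)p(t) dt = +∞. If u ∈ C²((0,1)) ∩ C([0,1]) satisfies −u''(t) ≥ p(t)g(u(t)), u > 0 on (0,1), and u(0) = u(1) = 0, then no such u exists; i.e., the problem −u'' ≥ p g(u), u(0)=u(1)=0, u > 0 has no solution. -/
open Set Filter MeasureTheory Topology

private lemma aux_left (p v : ℝ → ℝ)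
    (hpc : ContinuousOn p (Ioo 0 1))
    (hpnn : ∀ t ∈ Ioo (0:ℝ) 1, 0 ≤ p t)
    (hvc : ContinuousOn v (Icc 0 1))
    (hv1 : ∀ t ∈ Ioo (0:ℝ) 1, HasDerivAt v (deriv v t) t)
    (hv2 : ∀ t ∈ Ioo (0:ℝ) 1, HasDerivAt (deriv v) (deriv (deriv v) t) t)
    (key : ∀ t ∈ Ioo (0:ℝ) 1, p t ≤ -(deriv (deriv v) t))
    (hv0 : v 0 = 0) :
    IntegrableOn (fun t => t * p t) (Ioc 0 (1/2:ℝ)) := by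
  have half : (1/2:ℝ) ∈ Ioo (0:ℝ) 1 := by norm_num
  have hsub : ∀ {a b : ℝ}, a ∈ Ioo (0:ℝ) 1 → b ∈ Ioo (0:ℝ) 1 →
      uIcc a b ⊆ Ioo (0:ℝ) 1 := fun ha hb => Set.ordConnected_Ioo.uIcc_subset ha hb
  have hpint : ∀ {a b : ℝ}, a ∈ Ioo (0:ℝ) 1 → b ∈ Ioo (0:ℝ) 1 →
      IntervalIntegrable p volume a b :=
    fun ha hb => (hpc.mono (hsub ha hb)).intervalIntegrable
  have hv'c : ContinuousOn (deriv v) (Ioo 0 1) :=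
    fun t ht => (hv2 t ht).differentiableAt.continuousAt.continuousWithinAt
  set P : ℝ → ℝ := fun s => ∫ t in s..(1/2:ℝ), p t with hPdef
  have hPd : ∀ s ∈ Ioo (0:ℝ) 1, HasDerivAt P (-(p s)) s := fun s hs =>
    intervalIntegral.integral_hasDerivAt_left (hpint hs half)
      (hpc.stronglyMeasurableAtFilter isOpen_Ioo s hs)
      (hpc.continuousAt (Ioo_mem_nhds hs.1 hs.2))
  have hv''np : ∀ s ∈ Ioo (0:ℝ) 1, deriv (deriv v) s ≤ 0 := by
    intro s hs
    have h1 := hpnn s hs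
    have h2 := key s hs
    linarith
  have hAnti : AntitoneOn (deriv v) (Ioo 0 1) := by
    apply antitoneOn_of_deriv_nonpos (convex_Ioo _ _) hv'c
    · intro s hs
      rw [interior_Ioo] at hs
      exact (hv2 s hs).differentiableAt.differentiableWithinAt
    · intro s hs
      rw [interior_Ioo] at hs
      exact hv''np s hs
  have hGd : ∀ s ∈ Ioo (0:ℝ) 1,
      HasDerivAt (fun s => deriv v s - P s) (deriv (deriv v) s + p s) s := by
    intro s hs
    have := (hv2 s hs).sub (hPd s hs)
    exact this.congr_deriv (by ring)
  have hGanti : AntitoneOn (fun s => deriv v s - P s) (Ioo 0 1) := by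
    apply antitoneOn_of_deriv_nonpos (convex_Ioo _ _)
      (fun s hs => (hGd s hs).continuousAt.continuousWithinAt)
    · intro s hs; rw [interior_Ioo] at hs
      exact (hGd s hs).differentiableAt.differentiableWithinAt
    · intro s hs; rw [interior_Ioo] at hs
      rw [(hGd s hs).deriv]
      have := key s hs; linarith
  have hP0 : P (1/2:ℝ) = 0 := intervalIntegral.integral_same
  have hPle : ∀ s ∈ Ioo (0:ℝ) 1, s ≤ 1/2 → P s ≤ deriv v s - deriv v (1/2) := by
    intro s hs hs2
    have h := hGanti hs half hs2
    dsimp only at h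
    rw [hP0] at h
    linarith
  -- s * v'(s) ≤ v s
  have hsv' : ∀ s ∈ Ioo (0:ℝ) 1, s * deriv v s ≤ v s := by
    intro s hs
    have hvint : ∀ ε ∈ Ioo (0:ℝ) s, deriv v s * (s - ε) ≤ v s - v ε := by
      intro ε hε
      have hεI : ε ∈ Ioo (0:ℝ) 1 := ⟨hε.1, hε.2.trans hs.2⟩
      have huIcc : uIcc ε s ⊆ Ioo (0:ℝ) 1 := hsub hεI hs
      have hvi : IntervalIntegrable (deriv v) volume ε s :=
        (hv'c.mono huIcc).intervalIntegrable
      have hFTC : ∫ t in ε..s, deriv v t = v s - v ε :=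
        intervalIntegral.integral_eq_sub_of_hasDerivAt
          (fun t ht => hv1 t (huIcc ht)) hvi
      have hmono : (∫ _t in ε..s, deriv v s) ≤ ∫ t in ε..s, deriv v t := by
        apply intervalIntegral.integral_mono_on hε.2.le intervalIntegrable_const hvi
        intro t ht
        have htI : t ∈ Ioo (0:ℝ) 1 := huIcc (by rw [uIcc_of_le hε.2.le]; exact ht)
        exact hAnti htI hs ht.2
      rw [intervalIntegral.integral_const, hFTC] at hmono
      calc deriv v s * (s - ε) = (s - ε) • deriv v s := by
            rw [smul_eq_mul]; ring
        _ ≤ v s - v ε := hmono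
    haveI : (𝓝[Ioo (0:ℝ) s] (0:ℝ)).NeBot := left_nhdsWithin_Ioo_neBot hs.1
    have hvtend : Tendsto v (𝓝[Ioo (0:ℝ) s] 0) (𝓝 0) := by
      have h0 : (0:ℝ) ∈ Icc (0:ℝ) 1 := ⟨le_refl _, zero_le_one⟩
      have h := (hvc 0 h0).tendsto
      rw [hv0] at h
      exact h.mono_left (nhdsWithin_mono _ (fun x hx => ⟨hx.1.le, (hx.2.trans hs.2).le⟩))
    have hlin : Tendsto (fun ε : ℝ => deriv v s * (s - ε)) (𝓝[Ioo (0:ℝ) s] 0)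
        (𝓝 (deriv v s * (s - 0))) :=
      ((continuous_const.mul (continuous_const.sub continuous_id)).tendsto 0).mono_left
        nhdsWithin_le_nhds
    have hlim : Tendsto (fun ε => v s - v ε - deriv v s * (s - ε)) (𝓝[Ioo (0:ℝ) s] 0)
        (𝓝 (v s - 0 - deriv v s * (s - 0))) :=
      (tendsto_const_nhds.sub hvtend).sub hlin
    have hge : (0:ℝ) ≤ v s - 0 - deriv v s * (s - 0) := by
      refine ge_of_tendsto hlim ?_
      filter_upwards [self_mem_nhdsWithin] with ε hε
      have := hvint ε hε
      linarith
    have hmc : s * deriv v s = deriv v s * s := mul_comm _ _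
    have : deriv v s * (s - 0) = deriv v s * s := by ring
    linarith [hge, hmc, this]
  obtain ⟨M, hM⟩ := isCompact_Icc.exists_bound_of_continuousOn hvc
  set c₀ : ℝ := |deriv v (1/2:ℝ)| with hc₀def
  have hc₀nn : 0 ≤ c₀ := abs_nonneg _
  have hc₀le : -c₀ ≤ deriv v (1/2:ℝ) ∧ deriv v (1/2:ℝ) ≤ c₀ :=
    ⟨neg_abs_le _, le_abs_self _⟩
  set I : ℝ := 3*M + 2*c₀ with hIdef
  have hbound : ∀ a ∈ Ioo (0:ℝ) (1/2:ℝ), (∫ t in Ioc a (1/2:ℝ), ‖t * p t‖) ≤ I := by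
    intro a ha
    have haI : a ∈ Ioo (0:ℝ) 1 := ⟨ha.1, ha.2.trans (by norm_num)⟩
    have hIccsub : Icc a (1/2:ℝ) ⊆ Ioo (0:ℝ) 1 := fun x hx =>
      ⟨lt_of_lt_of_le ha.1 hx.1, lt_of_le_of_lt hx.2 (by norm_num)⟩
    have huIcc : uIcc a (1/2:ℝ) ⊆ Ioo (0:ℝ) 1 := by
      rw [uIcc_of_le ha.2.le]; exact hIccsub
    have hPc : ContinuousOn P (Ioo 0 1) := fun s hs =>
      (hPd s hs).differentiableAt.continuousAt.continuousWithinAt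
    have hKd : ∀ t ∈ uIcc a (1/2:ℝ),
        HasDerivAt (fun t => t * P t) (P t + t * -(p t)) t := by
      intro t ht
      have htI := huIcc ht
      have := (hasDerivAt_id t).mul (hPd t htI)
      exact this.congr_deriv (by simp)
    have hint1 : IntervalIntegrable (fun t => P t + t * -(p t)) volume a (1/2) :=
      ((hPc.mono huIcc).add (continuousOn_id.mul (hpc.mono huIcc).neg)).intervalIntegrable
    have hFTCK : ∫ t in a..(1/2:ℝ), (P t + t * -(p t)) = (1/2) * P (1/2) - a * P a :=
      intervalIntegral.integral_eq_sub_of_hasDerivAt hKd hint1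
    have htp_int : IntervalIntegrable (fun t => t * p t) volume a (1/2) :=
      (continuousOn_id.mul (hpc.mono huIcc)).intervalIntegrable
    have hPint : IntervalIntegrable P volume a (1/2) := (hPc.mono huIcc).intervalIntegrable
    have hsplit : ∫ t in a..(1/2:ℝ), (P t + t * -(p t))
        = (∫ t in a..(1/2:ℝ), P t) - ∫ t in a..(1/2:ℝ), t * p t := by
      rw [show (fun t => P t + t * -(p t)) = fun t => P t - t * p t from
        funext fun t => by ring]
      exact intervalIntegral.integral_sub hPint htp_int
    have hEq : ∫ t in a..(1/2:ℝ), t * p t = (∫ t in a..(1/2:ℝ), P t) + a * P a := by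
      rw [hsplit, hP0] at hFTCK
      linarith
    have hv'int : IntervalIntegrable (deriv v) volume a (1/2) :=
      (hv'c.mono huIcc).intervalIntegrable
    have hPbound : (∫ t in a..(1/2:ℝ), P t)
        ≤ ∫ t in a..(1/2:ℝ), (deriv v t - deriv v (1/2)) := by
      apply intervalIntegral.integral_mono_on ha.2.le hPint
        (hv'int.sub intervalIntegrable_const)
      intro t ht
      exact hPle t (hIccsub ht) ht.2
    have hFTCv : ∫ t in a..(1/2:ℝ), deriv v t = v (1/2) - v a :=
      intervalIntegral.integral_eq_sub_of_hasDerivAt (fun t ht => hv1 t (huIcc ht)) hv'int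
    have hIv : ∫ t in a..(1/2:ℝ), (deriv v t - deriv v (1/2))
        = (v (1/2) - v a) - ((1/2) - a) * deriv v (1/2) := by
      rw [intervalIntegral.integral_sub hv'int intervalIntegrable_const, hFTCv,
        intervalIntegral.integral_const]
      rw [smul_eq_mul]
    have hPa : P a ≤ deriv v a - deriv v (1/2) := hPle a haI ha.2.le
    have hMa : |v a| ≤ M := hM a (Ioo_subset_Icc_self haI)
    have hMhalf : |v (1/2:ℝ)| ≤ M := hM _ (Ioo_subset_Icc_self half)
    have haPa : a * P a ≤ M + c₀ := by
      have h1 : a * P a ≤ a * (deriv v a - deriv v (1/2)) :=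
        mul_le_mul_of_nonneg_left hPa ha.1.le
      have h2 : a * deriv v a ≤ v a := hsv' a haI
      have h3 : v a ≤ M := (le_abs_self _).trans hMa
      nlinarith [hc₀le.1, hc₀le.2, ha.1.le, ha.2.le, hc₀nn]
    have htotal : ∫ t in a..(1/2:ℝ), t * p t ≤ I := by
      have hb1 : v (1/2:ℝ) ≤ M := (le_abs_self _).trans hMhalf
      have hb2 : -M ≤ v a := by
        have := neg_abs_le (v a); linarith
      have hfrac : (0:ℝ) ≤ (1/2) - a ∧ (1/2) - a ≤ 1 := ⟨by linarith [ha.2], by linarith [ha.1]⟩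
      have hIPle : (∫ t in a..(1/2:ℝ), P t) ≤ 2*M + c₀ := by
        rw [hIv] at hPbound
        nlinarith [hfrac.1, hfrac.2, hc₀le.1, hc₀le.2, hc₀nn]
      rw [hEq, hIdef]
      linarith
    have hnorm : (∫ t in Ioc a (1/2:ℝ), ‖t * p t‖) = ∫ t in a..(1/2:ℝ), t * p t := by
      rw [intervalIntegral.integral_of_le ha.2.le]
      apply setIntegral_congr_fun measurableSet_Ioc
      intro t ht
      have htI : t ∈ Ioo (0:ℝ) 1 := hIccsub ⟨ht.1.le, ht.2⟩
      exact Real.norm_of_nonneg (mul_nonneg (ha.1.trans ht.1).le (hpnn t htI))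
    rw [hnorm]
    exact htotal
  -- sequence tending to 0
  have hseq_mem : ∀ n : ℕ, ((n:ℝ)+3)⁻¹ ∈ Ioo (0:ℝ) (1/2:ℝ) := by
    intro n
    have h3 : (0:ℝ) < (n:ℝ) + 3 := by positivity
    constructor
    · positivity
    · have : (3:ℝ) ≤ (n:ℝ) + 3 := by
        have := Nat.cast_nonneg (α := ℝ) n; linarith
      have h := inv_anti₀ (by norm_num : (0:ℝ) < 3) this
      calc ((n:ℝ)+3)⁻¹ ≤ (3:ℝ)⁻¹ := h
        _ < 1/2 := by norm_num
  have hseq_tend : Tendsto (fun n : ℕ => ((n:ℝ)+3)⁻¹) atTop (𝓝 0) := by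
    apply Tendsto.inv_tendsto_atTop
    exact tendsto_atTop_add_const_right atTop 3 tendsto_natCast_atTop_atTop
  apply MeasureTheory.integrableOn_Ioc_of_intervalIntegral_norm_bounded_left
    (a := fun n : ℕ => ((n:ℝ)+3)⁻¹) (I := I) ?_ hseq_tend ?_
  · intro n
    have hn := hseq_mem n
    have hIccsub : Icc (((n:ℝ)+3)⁻¹) (1/2:ℝ) ⊆ Ioo (0:ℝ) 1 := fun x hx =>
      ⟨lt_of_lt_of_le hn.1 hx.1, lt_of_le_of_lt hx.2 (by norm_num)⟩
    have : IntegrableOn (fun t => t * p t) (Icc (((n:ℝ)+3)⁻¹) (1/2:ℝ)) :=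
      ((continuousOn_id.mul (hpc.mono hIccsub)) :
        ContinuousOn (fun t => t * p t) (Icc (((n:ℝ)+3)⁻¹) (1/2:ℝ))).integrableOn_Icc
    exact this.mono_set Ioc_subset_Icc_self
  · exact Eventually.of_forall fun n => hbound _ (hseq_mem n)

theorem one_dimensional_nonexistence
    (p g : ℝ → ℝ)
    (hp_cont : ContinuousOn p (Ioo 0 1))
    (hp_pos : ∀ t ∈ Ioo (0:ℝ) 1, 0 < p t)
    (hg_cont : ContinuousOn g (Ioi 0))
    (hg_pos : ∀ t ∈ Ioi (0:ℝ), 0 < g t)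
    (hg_anti : StrictAntiOn g (Ioi 0))
    (hg_blow : Tendsto g (nhdsWithin 0 (Ioi 0)) atTop)
    (hdiv : ¬ IntervalIntegrable (fun t => t * (1 - t) * p t) volume 0 1) :
    ¬ ∃ u : ℝ → ℝ,
      ContinuousOn u (Icc 0 1) ∧
      (∀ t ∈ Ioo (0:ℝ) 1, HasDerivAt u (deriv u t) t) ∧
      (∀ t ∈ Ioo (0:ℝ) 1, HasDerivAt (deriv u) (deriv (deriv u) t) t) ∧
      (∀ t ∈ Ioo (0:ℝ) 1, p t * g (u t) ≤ -(deriv (deriv u) t)) ∧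
      (∀ t ∈ Ioo (0:ℝ) 1, 0 < u t) ∧
      u 0 = 0 ∧ u 1 = 0 := by
  rintro ⟨u, huc, hud1, hud2, hineq, hupos, hu0, hu1e⟩
  obtain ⟨x₀, hx₀m, hx₀⟩ := isCompact_Icc.exists_isMaxOn (nonempty_Icc.mpr zero_le_one) huc
  have half : (1/2:ℝ) ∈ Ioo (0:ℝ) 1 := by norm_num
  set M := u x₀ with hMdef
  have hMpos : 0 < M := lt_of_lt_of_le (hupos _ half) (hx₀ (Ioo_subset_Icc_self half))
  set gM := g M with hgMdef
  have hgMpos : 0 < gM := hg_pos M hMpos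
  have hgM_ne : gM ≠ 0 := ne_of_gt hgMpos
  have hkey : ∀ t ∈ Ioo (0:ℝ) 1, gM * p t ≤ -(deriv (deriv u) t) := by
    intro t ht
    have h1 : g M ≤ g (u t) :=
      hg_anti.antitoneOn (hupos t ht) hMpos (hx₀ (Ioo_subset_Icc_self ht))
    have h2 : gM * p t ≤ p t * g (u t) := by
      calc gM * p t = p t * gM := mul_comm _ _
        _ ≤ p t * g (u t) := mul_le_mul_of_nonneg_left h1 (hp_pos t ht).le
    exact h2.trans (hineq t ht)
  have hLeft : IntegrableOn (fun t => t * (gM * p t)) (Ioc 0 (1/2:ℝ)) :=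
    aux_left (fun t => gM * p t) u (continuousOn_const.mul hp_cont)
      (fun t ht => mul_nonneg hgMpos.le (hp_pos t ht).le) huc hud1 hud2 hkey hu0
  -- reflected function
  have hrefl : ∀ t ∈ Ioo (0:ℝ) 1, (1 - t) ∈ Ioo (0:ℝ) 1 := fun t ht =>
    ⟨by linarith [ht.2], by linarith [ht.1]⟩
  have hw_cont : ContinuousOn (fun s => u (1 - s)) (Icc 0 1) := by
    apply huc.comp (continuous_const.sub continuous_id).continuousOn
    intro x hx
    show (1 - x) ∈ Icc (0:ℝ) 1
    exact ⟨by linarith [hx.2], by linarith [hx.1]⟩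
  have hwd1 : ∀ t ∈ Ioo (0:ℝ) 1, HasDerivAt (fun s => u (1 - s)) (-(deriv u (1 - t))) t := by
    intro t ht
    have h := (hud1 (1 - t) (hrefl t ht)).comp t
      ((hasDerivAt_const t (1:ℝ)).sub (hasDerivAt_id t))
    exact h.congr_deriv (by ring)
  have hwderiv : ∀ t ∈ Ioo (0:ℝ) 1,
      deriv (fun s => u (1 - s)) t = -(deriv u (1 - t)) :=
    fun t ht => (hwd1 t ht).deriv
  have hwd1' : ∀ t ∈ Ioo (0:ℝ) 1,
      HasDerivAt (fun s => u (1 - s)) (deriv (fun s => u (1 - s)) t) t :=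
    fun t ht => (hwderiv t ht) ▸ hwd1 t ht
  have hwd2 : ∀ t ∈ Ioo (0:ℝ) 1,
      HasDerivAt (deriv (fun s => u (1 - s))) (deriv (deriv u) (1 - t)) t := by
    intro t ht
    have hev : (fun s => -(deriv u (1 - s))) =ᶠ[𝓝 t] deriv (fun s => u (1 - s)) := by
      filter_upwards [Ioo_mem_nhds ht.1 ht.2] with s hs
      exact (hwderiv s hs).symm
    have h2 : HasDerivAt (fun s => -(deriv u (1 - s))) (deriv (deriv u) (1 - t)) t := by
      have h := ((hud2 (1 - t) (hrefl t ht)).comp t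
        ((hasDerivAt_const t (1:ℝ)).sub (hasDerivAt_id t))).neg
      exact h.congr_deriv (by ring)
    exact h2.congr_of_eventuallyEq hev.symm
  have hwsecond : ∀ t ∈ Ioo (0:ℝ) 1,
      deriv (deriv (fun s => u (1 - s))) t = deriv (deriv u) (1 - t) :=
    fun t ht => (hwd2 t ht).deriv
  have hwd2' : ∀ t ∈ Ioo (0:ℝ) 1,
      HasDerivAt (deriv (fun s => u (1 - s))) (deriv (deriv (fun s => u (1 - s))) t) t :=
    fun t ht => (hwsecond t ht) ▸ hwd2 t ht
  have hkeyw : ∀ t ∈ Ioo (0:ℝ) 1,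
      gM * p (1 - t) ≤ -(deriv (deriv (fun s => u (1 - s))) t) := by
    intro t ht
    rw [hwsecond t ht]
    exact hkey (1 - t) (hrefl t ht)
  have hRight : IntegrableOn (fun t => t * (gM * p (1 - t))) (Ioc 0 (1/2:ℝ)) :=
    aux_left (fun t => gM * p (1 - t)) (fun s => u (1 - s))
      (continuousOn_const.mul
        (hp_cont.comp (continuous_const.sub continuous_id).continuousOn hrefl))
      (fun t ht => mul_nonneg hgMpos.le (hp_pos _ (hrefl t ht)).le)
      hw_cont hwd1' hwd2' hkeyw (by simpa using hu1e)
  -- combine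
  have hL1 : IntervalIntegrable (fun t => t * p t) volume 0 (1/2) := by
    have h := (intervalIntegrable_iff_integrableOn_Ioc_of_le
      (by norm_num : (0:ℝ) ≤ 1/2)).mpr hLeft
    have h2 := h.const_mul gM⁻¹
    have heq : (fun t => gM⁻¹ * (t * (gM * p t))) = fun t => t * p t := by
      funext t; field_simp
    rwa [heq] at h2
  have hR1 : IntervalIntegrable (fun t => (1 - t) * p t) volume (1/2) 1 := by
    have h := (intervalIntegrable_iff_integrableOn_Ioc_of_le
      (by norm_num : (0:ℝ) ≤ 1/2)).mpr hRight
    have h2 := h.comp_sub_left 1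
    simp only [sub_sub_cancel] at h2
    norm_num at h2
    have h3 := h2.symm
    have h4 := h3.const_mul gM⁻¹
    have heq : (fun t => gM⁻¹ * ((1 - t) * (gM * p t))) = fun t => (1 - t) * p t := by
      funext t; field_simp
    rwa [heq] at h4
  have hF_left : IntervalIntegrable (fun t => t * (1 - t) * p t) volume 0 (1/2) := by
    apply hL1.mono_fun
    · have hsub : Ioc (0:ℝ) (1/2) ⊆ Ioo (0:ℝ) 1 := fun x hx =>
        ⟨hx.1, lt_of_le_of_lt hx.2 (by norm_num)⟩
      have hc : ContinuousOn (fun t => t * (1 - t) * p t) (Ioc (0:ℝ) (1/2)) :=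
        ((continuousOn_id.mul (continuousOn_const.sub continuousOn_id)).mul
          (hp_cont.mono hsub))
      have := hc.aestronglyMeasurable (μ := volume) measurableSet_Ioc
      rwa [uIoc_of_le (by norm_num : (0:ℝ) ≤ 1/2)]
    · rw [uIoc_of_le (by norm_num : (0:ℝ) ≤ 1/2)]
      refine (ae_restrict_iff' measurableSet_Ioc).mpr (Eventually.of_forall ?_)
      intro x hx
      have hxI : x ∈ Ioo (0:ℝ) 1 := ⟨hx.1, lt_of_le_of_lt hx.2 (by norm_num)⟩
      have hp0 := (hp_pos x hxI).le
      show ‖x * (1 - x) * p x‖ ≤ ‖x * p x‖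
      rw [Real.norm_eq_abs, Real.norm_eq_abs,
        abs_of_nonneg (mul_nonneg (mul_nonneg hx.1.le (by linarith [hx.2] : (0:ℝ) ≤ 1 - x)) hp0),
        abs_of_nonneg (mul_nonneg hx.1.le hp0)]
      nlinarith [mul_nonneg (mul_nonneg hx.1.le hx.1.le) hp0]
  have hF_right : IntervalIntegrable (fun t => t * (1 - t) * p t) volume (1/2) 1 := by
    apply hR1.mono_fun
    · have hres : (volume : Measure ℝ).restrict (uIoc (1/2:ℝ) 1)
          = volume.restrict (Ioo (1/2:ℝ) 1) := by
        rw [uIoc_of_le (by norm_num : (1/2:ℝ) ≤ 1)]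
        exact (Measure.restrict_congr_set Ioo_ae_eq_Ioc).symm
      rw [hres]
      refine ContinuousOn.aestronglyMeasurable ?_ measurableSet_Ioo
      have hsub : Ioo (1/2:ℝ) 1 ⊆ Ioo (0:ℝ) 1 := fun x hx =>
        ⟨lt_trans (by norm_num) hx.1, hx.2⟩
      exact (continuousOn_id.mul (continuousOn_const.sub continuousOn_id)).mul
        (hp_cont.mono hsub)
    · rw [uIoc_of_le (by norm_num : (1/2:ℝ) ≤ 1)]
      refine (ae_restrict_iff' measurableSet_Ioc).mpr (Eventually.of_forall ?_)
      intro x hx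
      show ‖x * (1 - x) * p x‖ ≤ ‖(1 - x) * p x‖
      rw [Real.norm_eq_abs, Real.norm_eq_abs]
      have h1 : |x * (1 - x) * p x| = |x| * |(1 - x) * p x| := by
        rw [mul_assoc, abs_mul]
      have h2 : |x| ≤ 1 := abs_le.mpr ⟨by linarith [hx.1], hx.2⟩
      calc |x * (1 - x) * p x| = |x| * |(1 - x) * p x| := h1
        _ ≤ 1 * |(1 - x) * p x| := mul_le_mul_of_nonneg_right h2 (abs_nonneg _)
        _ = |(1 - x) * p x| := one_mul _
  exact hdiv (hF_left.trans hF_right)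
end
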